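/- arXiv:2301.02889 — 12 statements merged into one kernel-verified Lean document; each statement's English description precedes it below -/
import Mathlib

section
/- Let G = (V,E) be a finite simple undirected graph with thresholds τ : V → ℕ satisfying 1 ≤ τ(v) ≤ d(v) for every vertex v, and let γ(G) denote the minimum, over all 2-colorings c : V → {0,1}, of the number of edges of G whose two endpoints receive the same color. Then for every configuration C, the sequential configuration potential satisfies P(C) ≥ (Σ_{v ∈ V} min(τ0(v), τ(v))) + γ(G). -/
/-- The degree of vertex `v` in `G`. -/
noncomputable def deg {V : Type*} (G : SimpleGraph V) (v : V) : ℕ := (G.neighborSet v).ncard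

/-- `τ0 v = d(v) + 1 - τ(v)`, the minimum number of state-1 neighbors forcing state 0. -/
noncomputable def tau0 {V : Type*} (G : SimpleGraph V) (τ : V → ℕ) (v : V) : ℕ :=
  deg G v + 1 - τ v

/-- The potential of a vertex under configuration `C`: `τ0 v` if `C v = 0`, else `τ v`. -/
noncomputable def vertexPot {V : Type*} (G : SimpleGraph V) (τ : V → ℕ)
    (C : V → Bool) (v : V) : ℕ :=
  if C v = false then tau0 G τ v else τ v

/-- The set of monochromatic edges of `G` under the 2-coloring `C`
(edges whose two endpoints receive the same state). -/
def monoEdges {V : Type*} (G : SimpleGraph V) (C : V → Bool) : Set (Sym2 V) :=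
  {e | e ∈ G.edgeSet ∧ ∃ u w, e = s(u, w) ∧ C u = C w}

/-- The sequential configuration potential: the sum of all vertex potentials plus the
sum of all edge potentials (an edge contributes 1 iff its endpoints have equal states). -/
noncomputable def seqPot {V : Type*} [Fintype V] (G : SimpleGraph V) (τ : V → ℕ)
    (C : V → Bool) : ℕ :=
  (∑ v, vertexPot G τ C v) + (monoEdges G C).ncard

/-- `γ(G)`: the minimum number of monochromatic edges over all 2-colorings of `V`. -/
noncomputable def gamma {V : Type*} [Fintype V] (G : SimpleGraph V) : ℕ :=
  ⨅ c : V → Bool, (monoEdges G c).ncard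

/-- Lower bound on the sequential configuration potential:
`P(C) ≥ Σ_v min(τ0(v), τ(v)) + γ(G)`. -/
theorem stmt4 {V : Type*} [Fintype V] (G : SimpleGraph V) (τ : V → ℕ)
    (hτ : ∀ v, 1 ≤ τ v ∧ τ v ≤ deg G v) (C : V → Bool) :
    (∑ v, min (tau0 G τ v) (τ v)) + gamma G ≤ seqPot G τ C := by
  unfold seqPot
  apply Nat.add_le_add
  · apply Finset.sum_le_sum
    intro v _
    unfold vertexPot
    split
    · exact min_le_left _ _
    · exact min_le_right _ _
  · exact ciInf_le (OrderBot.bddBelow _) C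
end

section
/- Let G = (V,E) be a finite simple undirected graph with thresholds τ : V → ℕ. Suppose configuration C̃ is obtained from configuration C by a single best-response flip at a vertex u (i.e., C̃ agrees with C except at u, C̃(u) = 1 − C(u), and C̃(u) = 1 iff |{w ∈ N(u) : C(w) = 0}| ≥ τ(u)). Then the sequential configuration potential strictly decreases by at least 1: P(C̃) − P(C) ≤ −1. -/
/-- `C̃` is obtained from `C` by a single best-response flip at `u` (self non-essential
mode): `C̃` agrees with `C` off `u`, `C̃ u = 1 - C u`, and the new state of `u` is its
best response: `C̃ u = 1` iff at least `τ u` neighbors of `u` have state `0` in `C`. -/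
def isFlip {V : Type*} [DecidableEq V] (G : SimpleGraph V) (τ : V → ℕ)
    (C Ct : V → Bool) (u : V) : Prop :=
  Ct = Function.update C u (!C u) ∧
    (Ct u = true ↔ τ u ≤ {w | G.Adj u w ∧ C w = false}.ncard)

lemma mono_inter_ncard {V : Type*} (G : SimpleGraph V) (D : V → Bool) (u : V) :
    (monoEdges G D ∩ {e | u ∈ e}).ncard = {w | G.Adj u w ∧ D w = D u}.ncard := by
  have himg : monoEdges G D ∩ {e | u ∈ e}
      = (fun w => s(u, w)) '' {w | G.Adj u w ∧ D w = D u} := by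
    ext e
    induction e using Sym2.inductionOn with
    | hf x y =>
      constructor
      · rintro ⟨⟨hE, a, b, hab, hDab⟩, hu⟩
        rw [SimpleGraph.mem_edgeSet] at hE
        have hxy : D x = D y := by
          rw [Sym2.eq_iff] at hab
          rcases hab with ⟨rfl, rfl⟩ | ⟨rfl, rfl⟩
          · exact hDab
          · exact hDab.symm
        have hu' : u = x ∨ u = y := Sym2.mem_iff.mp hu
        rcases hu' with rfl | rfl
        · exact ⟨y, ⟨hE, hxy.symm⟩, rfl⟩
        · exact ⟨x, ⟨hE.symm, hxy⟩, Sym2.eq_swap⟩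
      · rintro ⟨w, ⟨hadj, hD⟩, heq⟩
        refine ⟨⟨?_, u, w, heq.symm, hD.symm⟩, ?_⟩
        · rw [← heq]; exact hadj
        · show u ∈ s(x, y)
          rw [← heq]; exact Sym2.mem_mk_left u w
  rw [himg]
  exact Set.ncard_image_of_injOn fun w _ w' _ h => Sym2.congr_right.mp h

lemma mono_diff_eq {V : Type*} [DecidableEq V] (G : SimpleGraph V) (C : V → Bool) (u : V)
    (b : Bool) :
    monoEdges G (Function.update C u b) \ {e | u ∈ e} = monoEdges G C \ {e | u ∈ e} := by
  have key : ∀ (D D' : V → Bool), (∀ v, v ≠ u → D v = D' v) →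
      ∀ e ∈ monoEdges G D \ {e | u ∈ e}, e ∈ monoEdges G D' \ {e | u ∈ e} := by
    rintro D D' hDD e ⟨⟨hE, a, c, rfl, hD⟩, hu⟩
    have ha : a ≠ u := fun h => hu (h ▸ Sym2.mem_mk_left a c)
    have hc : c ≠ u := fun h => hu (h ▸ Sym2.mem_mk_right a c)
    exact ⟨⟨hE, a, c, rfl, by rw [← hDD a ha, ← hDD c hc]; exact hD⟩, hu⟩
  have h1 : ∀ v, v ≠ u → Function.update C u b v = C v := fun v hv =>
    Function.update_of_ne hv _ _
  exact Set.Subset.antisymm (key _ _ h1) (key _ _ fun v hv => (h1 v hv).symm)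

/-- A single best-response flip strictly decreases the sequential configuration
potential by at least 1. -/
theorem stmt6 {V : Type*} [Fintype V] [DecidableEq V] (G : SimpleGraph V) (τ : V → ℕ)
    (C Ct : V → Bool) (u : V) (h : isFlip G τ C Ct u) :
    (seqPot G τ Ct : ℤ) - (seqPot G τ C : ℤ) ≤ -1 := by
  obtain ⟨hCt, hbr⟩ := h
  have hCtu : Ct u = !C u := by rw [hCt]; simp
  have hCtv : ∀ v, v ≠ u → Ct v = C v := fun v hv => by
    rw [hCt]; exact Function.update_of_ne hv _ _
  -- vertex sums
  have hsum : (((∑ v, vertexPot G τ Ct v : ℕ)) : ℤ) - (((∑ v, vertexPot G τ C v : ℕ)) : ℤ)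
      = ((vertexPot G τ Ct u : ℕ) : ℤ) - ((vertexPot G τ C u : ℕ) : ℤ) := by
    have h1 : ∑ v, vertexPot G τ Ct v
        = vertexPot G τ Ct u + ∑ v ∈ Finset.univ.erase u, vertexPot G τ Ct v :=
      (Finset.add_sum_erase _ _ (Finset.mem_univ u)).symm
    have h2 : ∑ v, vertexPot G τ C v
        = vertexPot G τ C u + ∑ v ∈ Finset.univ.erase u, vertexPot G τ C v :=
      (Finset.add_sum_erase _ _ (Finset.mem_univ u)).symm
    have h3 : ∑ v ∈ Finset.univ.erase u, vertexPot G τ Ct v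
        = ∑ v ∈ Finset.univ.erase u, vertexPot G τ C v := by
      refine Finset.sum_congr rfl fun v hv => ?_
      unfold vertexPot
      rw [hCtv v (Finset.ne_of_mem_erase hv)]
    omega
  -- edge counts
  set A : Set (Sym2 V) := {e | u ∈ e} with hA
  set s : Set V := {w | G.Adj u w ∧ C w = C u} with hs
  set t : Set V := {w | G.Adj u w ∧ C w = !C u} with ht
  have hst : s.ncard + t.ncard = deg G u := by
    rw [← Set.ncard_union_eq ?disj (Set.toFinite s) (Set.toFinite t)]
    · congr 1
      ext w
      simp only [hs, ht, Set.mem_union, Set.mem_setOf_eq, deg, SimpleGraph.mem_neighborSet]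
      constructor
      · rintro (⟨h1, _⟩ | ⟨h1, _⟩) <;> exact h1
      · intro hadj
        cases hC : C w <;> cases hCu : C u <;> simp_all
    · rw [Set.disjoint_left]
      rintro w ⟨_, h1⟩ ⟨_, h2⟩
      rw [h1] at h2
      simp at h2
  have hCmono : (monoEdges G C).ncard = s.ncard + (monoEdges G C \ A).ncard := by
    rw [← mono_inter_ncard G C u, Set.ncard_inter_add_ncard_diff_eq_ncard _ _ (Set.toFinite _)]
  have hCtmono : (monoEdges G Ct).ncard = t.ncard + (monoEdges G Ct \ A).ncard := by
    have heq : {w | G.Adj u w ∧ Ct w = Ct u} = t := by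
      ext w
      simp only [ht, Set.mem_setOf_eq]
      constructor
      · rintro ⟨hadj, hw⟩
        exact ⟨hadj, by rw [← hCtu, ← hCtv w (G.ne_of_adj hadj).symm]; exact hw⟩
      · rintro ⟨hadj, hw⟩
        exact ⟨hadj, by rw [hCtu, hCtv w (G.ne_of_adj hadj).symm]; exact hw⟩
    rw [← heq, ← mono_inter_ncard G Ct u,
      Set.ncard_inter_add_ncard_diff_eq_ncard _ _ (Set.toFinite _)]
  have hdiff : (monoEdges G Ct \ A).ncard = (monoEdges G C \ A).ncard := by
    rw [hCt]; exact congrArg Set.ncard (mono_diff_eq G C u (!C u))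
  set a := {w | G.Adj u w ∧ C w = false}.ncard with ha
  simp only [seqPot, Nat.cast_add]
  cases hCu : C u with
  | false =>
    have hCta : Ct u = true := by rw [hCtu, hCu]; rfl
    have hτ : τ u ≤ a := hbr.mp hCta
    have hsa : s.ncard = a := by
      rw [ha]; congr 1; rw [hs, hCu]
    have hVC : vertexPot G τ C u = deg G u + 1 - τ u := by
      unfold vertexPot tau0; rw [hCu]; simp
    have hVCt : vertexPot G τ Ct u = τ u := by
      unfold vertexPot; rw [hCta]; simp
    omega
  | true =>
    have hCta : Ct u = false := by rw [hCtu, hCu]; rfl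
    have hτ : a < τ u := by
      by_contra hc
      push_neg at hc
      have := hbr.mpr hc
      rw [hCta] at this
      exact absurd this (by simp)
    have hta : t.ncard = a := by
      rw [ha]; congr 1; rw [ht, hCu]; simp
    have hVC : vertexPot G τ C u = τ u := by
      unfold vertexPot; rw [hCu]; simp
    have hVCt : vertexPot G τ Ct u = deg G u + 1 - τ u := by
      unfold vertexPot tau0; rw [hCta]; simp
    omega
end

section
/- Let G = (V,E) be a finite simple undirected graph with n vertices and m edges, and thresholds τ : V → ℕ satisfying 1 ≤ τ(v) ≤ d(v) for every vertex v. Then every sequence of configurations C_0, C_1, …, C_k in which each C_{i+1} is obtained from C_i by a single best-response flip at some vertex has length k ≤ 3m − n. Consequently, starting from any configuration, the sequential self non-essential inverted-threshold dynamics reaches a fixed point after at most 3m − n state changes. -/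
/-- A configuration is a fixed point of the self non-essential inverted-threshold
dynamics if every vertex's state equals its best response. -/
def snFixed {V : Type*} (G : SimpleGraph V) (τ : V → ℕ) (C : V → Bool) : Prop :=
  ∀ v, C v = true ↔ τ v ≤ {u | G.Adj v u ∧ C u = false}.ncard

section Aux

open Finset

variable {V : Type*} [Fintype V] [DecidableEq V] (G : SimpleGraph V) (τ : V → ℕ)

open Classical in
/-- indicator that `vw` is an edge with equal states -/
noncomputable def eInd (C : V → Bool) (v w : V) : ℤ :=
  if G.Adj v w ∧ C w = C v then 1 else 0

open Classical in
/-- number of `0`-state neighbors of `u`, as an integer -/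
noncomputable def nz (C : V → Bool) (u : V) : ℤ :=
  ∑ w : V, if G.Adj u w ∧ C w = false then 1 else 0

open Classical in
/-- degree as an integer sum -/
noncomputable def degI (u : V) : ℤ := ∑ w : V, if G.Adj u w then 1 else 0

/-- the potential function -/
noncomputable def pot (C : V → Bool) : ℤ :=
  (∑ v : V, ∑ w : V, eInd G C v w) +
    ∑ v : V, (if C v = true then 2 * (2 * (τ v : ℤ) - 1 - degI G v) else 0)

open Classical in
lemma deg_eq_degI (v : V) : (deg G v : ℤ) = degI G v := by
  classical
  rw [degI, Finset.sum_boole]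
  congr 1
  rw [deg, Set.ncard_eq_toFinset_card']
  congr 1
  ext w
  simp [SimpleGraph.mem_neighborSet]

open Classical in
lemma ncard_eq_nz (C : V → Bool) (u : V) :
    ({w | G.Adj u w ∧ C w = false}.ncard : ℤ) = nz G C u := by
  classical
  rw [nz, Finset.sum_boole]
  congr 1
  rw [Set.ncard_eq_toFinset_card']
  congr 1
  ext w
  simp

open Classical in
lemma handshake : ∑ v : V, degI G v = 2 * (G.edgeSet.ncard : ℤ) := by
  classical
  have h := SimpleGraph.sum_degrees_eq_twice_card_edges G
  have h1 : ∀ v, degI G v = (G.degree v : ℤ) := by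
    intro v
    rw [degI, Finset.sum_boole]
    congr 1
    rw [← SimpleGraph.card_neighborFinset_eq_degree]
    congr 1
    ext w
    simp
  have h2 : (G.edgeSet.ncard : ℤ) = (G.edgeFinset.card : ℤ) := by
    congr 1
    rw [Set.ncard_eq_toFinset_card']
    try rfl
  calc ∑ v : V, degI G v = ∑ v : V, (G.degree v : ℤ) := Finset.sum_congr rfl fun v _ => h1 v
    _ = ((∑ v : V, G.degree v : ℕ) : ℤ) := by push_cast; ring
    _ = ((2 * G.edgeFinset.card : ℕ) : ℤ) := by rw [h]
    _ = 2 * (G.edgeSet.ncard : ℤ) := by rw [h2]; push_cast; ring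

lemma eInd_symm (C : V → Bool) (v w : V) : eInd G C v w = eInd G C w v := by
  classical
  unfold eInd
  by_cases h : G.Adj v w ∧ C w = C v
  · rw [if_pos h, if_pos ⟨h.1.symm, h.2.symm⟩]
  · rw [if_neg h, if_neg fun hh => h ⟨hh.1.symm, hh.2.symm⟩]

lemma eInd_nonneg (C : V → Bool) (v w : V) : 0 ≤ eInd G C v w := by
  unfold eInd; split <;> simp

open Classical in
lemma eInd_le (C : V → Bool) (v w : V) : eInd G C v w ≤ if G.Adj v w then 1 else 0 := by
  unfold eInd; split <;> rename_i h
  · rw [if_pos h.1]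
  · split <;> simp

/-- key decrease lemma -/
lemma pot_decrease (C Ct : V → Bool) (u : V) (h : isFlip G τ C Ct u) :
    pot G τ Ct + 2 ≤ pot G τ C := by
  classical
  obtain ⟨hCt, hiff⟩ := h
  -- the edge part difference
  set g : V → V → ℤ := fun v w => eInd G Ct v w - eInd G C v w with hg
  have hCtu : Ct u = !C u := by rw [hCt]; simp
  have hCtw : ∀ w, w ≠ u → Ct w = C w := by
    intro w hw; rw [hCt, Function.update_of_ne hw]
  have key0 : ∀ v w, v ≠ u → w ≠ u → g v w = 0 := by
    intro v w hv hw
    simp only [hg, eInd, hCtw _ hv, hCtw _ hw, sub_self]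
  have guu : g u u = 0 := by
    have hA : ¬ G.Adj u u := G.irrefl
    simp [hg, eInd, hA]
  have key1 : ∀ v, v ≠ u → ∑ w : V, g v w = g v u := by
    intro v hv
    apply Finset.sum_eq_single u
    · intro w _ hw; exact key0 v w hv hw
    · intro h; exact absurd (Finset.mem_univ u) h
  have gsymm : ∀ v w, g v w = g w v := by
    intro v w; simp only [hg, eInd_symm]
  have edge_diff :
      (∑ v : V, ∑ w : V, eInd G Ct v w) - (∑ v : V, ∑ w : V, eInd G C v w)
        = 2 * ∑ w : V, g u w := by
    rw [← Finset.sum_sub_distrib]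
    simp only [← Finset.sum_sub_distrib]
    calc ∑ v : V, ∑ w : V, g v w
        = ∑ w : V, g u w + ∑ v ∈ Finset.univ.erase u, ∑ w : V, g v w :=
          (Finset.add_sum_erase Finset.univ (fun v => ∑ w : V, g v w)
            (Finset.mem_univ u)).symm
      _ = ∑ w : V, g u w + ∑ v ∈ Finset.univ.erase u, g u v := by
          congr 1
          apply Finset.sum_congr rfl
          intro v hv
          rw [key1 v (Finset.ne_of_mem_erase hv), gsymm]
      _ = ∑ w : V, g u w + (∑ v : V, g u v - g u u) := by
          rw [← Finset.add_sum_erase Finset.univ (g u) (Finset.mem_univ u)]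
          ring
      _ = 2 * ∑ w : V, g u w := by rw [guu]; ring
  -- vertex part difference
  set t : V → ℤ := fun v => 2 * (2 * (τ v : ℤ) - 1 - degI G v) with ht
  have vert_diff :
      (∑ v : V, (if Ct v = true then t v else 0)) - (∑ v : V, (if C v = true then t v else 0))
        = (if Ct u = true then t u else 0) - (if C u = true then t u else 0) := by
    rw [← Finset.sum_sub_distrib]
    apply Finset.sum_eq_single u
    · intro w _ hw; rw [hCtw _ hw]; ring
    · intro h; exact absurd (Finset.mem_univ u) h
  have hthr : (Ct u = true) ↔ (τ u : ℤ) ≤ nz G C u := by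
    rw [hiff, ← ncard_eq_nz]
    exact_mod_cast Iff.rfl
  -- compute ∑ w, g u w by cases on C u
  cases hcu : C u with
  | false =>
    have hCtu' : Ct u = true := by rw [hCtu, hcu]; rfl
    have hz : (τ u : ℤ) ≤ nz G C u := hthr.mp hCtu'
    have s1 : ∑ w : V, eInd G C u w = nz G C u := by
      rw [nz]
      apply Finset.sum_congr rfl
      intro w _
      simp only [eInd, hcu]
    have s2 : ∑ w : V, eInd G Ct u w = degI G u - nz G C u := by
      rw [degI, nz, ← Finset.sum_sub_distrib]
      apply Finset.sum_congr rfl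
      intro w _
      by_cases hw : w = u
      · subst hw
        simp [eInd, G.irrefl]
      · rw [eInd]
        rw [hCtw _ hw, hCtu']
        by_cases hA : G.Adj u w
        · cases hcw : C w <;> simp [hA, hcw]
        · simp [hA]
    have hsum : ∑ w : V, g u w = degI G u - 2 * nz G C u := by
      simp only [hg, Finset.sum_sub_distrib, s1, s2]; ring
    have hvd : (if Ct u = true then t u else 0) - (if C u = true then t u else 0) = t u := by
      rw [hCtu', hcu]; simp
    have : pot G τ Ct - pot G τ C = 2 * (degI G u - 2 * nz G C u) + t u := by
      rw [pot, pot]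
      have := edge_diff
      have := vert_diff
      rw [hvd] at vert_diff
      rw [hsum] at edge_diff
      linarith [edge_diff, vert_diff]
    rw [ht] at this
    simp only at this
    linarith
  | true =>
    have hCtu' : Ct u = false := by rw [hCtu, hcu]; rfl
    have hz : nz G C u + 1 ≤ (τ u : ℤ) := by
      have : ¬ ((τ u : ℤ) ≤ nz G C u) := fun hh => by
        rw [hCtu'] at hthr; exact absurd (hthr.mpr hh) (by simp)
      omega
    have s1 : ∑ w : V, eInd G C u w = degI G u - nz G C u := by
      rw [degI, nz, ← Finset.sum_sub_distrib]
      apply Finset.sum_congr rfl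
      intro w _
      rw [eInd, hcu]
      by_cases hA : G.Adj u w
      · cases hcw : C w <;> simp [hA, hcw]
      · simp [hA]
    have s2 : ∑ w : V, eInd G Ct u w = nz G C u := by
      rw [nz]
      apply Finset.sum_congr rfl
      intro w _
      by_cases hw : w = u
      · subst hw
        simp [eInd, G.irrefl]
      · rw [eInd, hCtw _ hw, hCtu']
    have hsum : ∑ w : V, g u w = 2 * nz G C u - degI G u := by
      simp only [hg, Finset.sum_sub_distrib, s1, s2]; ring
    have hvd : (if Ct u = true then t u else 0) - (if C u = true then t u else 0) = -t u := by
      rw [hCtu', hcu]; simp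
    have : pot G τ Ct - pot G τ C = 2 * (2 * nz G C u - degI G u) - t u := by
      rw [pot, pot]
      rw [hvd] at vert_diff
      rw [hsum] at edge_diff
      linarith [edge_diff, vert_diff]
    rw [ht] at this
    simp only at this
    linarith

open Classical in
lemma pot_lower (C : V → Bool) :
    ∑ v : V, min 0 (2 * (2 * (τ v : ℤ) - 1 - degI G v)) ≤ pot G τ C := by
  rw [pot]
  have h1 : (0 : ℤ) ≤ ∑ v : V, ∑ w : V, eInd G C v w :=
    Finset.sum_nonneg fun v _ => Finset.sum_nonneg fun w _ => eInd_nonneg G C v w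
  have h2 : ∑ v : V, min 0 (2 * (2 * (τ v : ℤ) - 1 - degI G v)) ≤
      ∑ v : V, (if C v = true then 2 * (2 * (τ v : ℤ) - 1 - degI G v) else 0) := by
    apply Finset.sum_le_sum
    intro v _
    split
    · exact min_le_right _ _
    · exact min_le_left _ _
  linarith

open Classical in
lemma pot_upper (C : V → Bool) :
    pot G τ C ≤ (∑ v : V, degI G v) +
      ∑ v : V, max 0 (2 * (2 * (τ v : ℤ) - 1 - degI G v)) := by
  rw [pot]
  have h1 : ∑ v : V, ∑ w : V, eInd G C v w ≤ ∑ v : V, degI G v := by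
    apply Finset.sum_le_sum
    intro v _
    rw [degI]
    exact Finset.sum_le_sum fun w _ => eInd_le G C v w
  have h2 : ∑ v : V, (if C v = true then 2 * (2 * (τ v : ℤ) - 1 - degI G v) else 0) ≤
      ∑ v : V, max 0 (2 * (2 * (τ v : ℤ) - 1 - degI G v)) := by
    apply Finset.sum_le_sum
    intro v _
    split
    · exact le_max_right _ _
    · exact le_max_left _ _
  linarith

/-- range of the potential -/
lemma pot_range (hτ : ∀ v, 1 ≤ τ v ∧ τ v ≤ deg G v) (C C' : V → Bool) :
    pot G τ C - pot G τ C' ≤ 2 * (3 * (G.edgeSet.ncard : ℤ) - (Fintype.card V : ℤ)) := by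
  classical
  have hU := pot_upper G τ C
  have hL := pot_lower G τ C'
  have hper : ∀ v : V, max 0 (2 * (2 * (τ v : ℤ) - 1 - degI G v))
      - min 0 (2 * (2 * (τ v : ℤ) - 1 - degI G v)) ≤ 2 * (degI G v - 1) := by
    intro v
    have h1 : (1 : ℤ) ≤ (τ v : ℤ) := by exact_mod_cast (hτ v).1
    have h2 : (τ v : ℤ) ≤ degI G v := by
      rw [← deg_eq_degI]; exact_mod_cast (hτ v).2
    rcases le_total (0 : ℤ) (2 * (2 * (τ v : ℤ) - 1 - degI G v)) with h | h
    · rw [max_eq_right h, min_eq_left h]; linarith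
    · rw [max_eq_left h, min_eq_right h]; linarith
  have hsum : ∑ v : V, (max 0 (2 * (2 * (τ v : ℤ) - 1 - degI G v))
      - min 0 (2 * (2 * (τ v : ℤ) - 1 - degI G v))) ≤
      ∑ v : V, (2 * (degI G v - 1)) := Finset.sum_le_sum fun v _ => hper v
  have hD : ∑ v : V, degI G v = 2 * (G.edgeSet.ncard : ℤ) := handshake G
  have hcard : ∑ v : V, (2 * (degI G v - 1)) = 2 * (2 * (G.edgeSet.ncard : ℤ))
      - 2 * (Fintype.card V : ℤ) := by
    rw [Finset.sum_congr rfl (fun v _ => by ring : ∀ v ∈ Finset.univ,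
      2 * (degI G v - 1) = 2 * degI G v - 2)]
    rw [Finset.sum_sub_distrib, ← Finset.mul_sum, hD]
    simp [Finset.card_univ, mul_comm]
  rw [Finset.sum_sub_distrib] at hsum
  linarith

/-- chain decrease -/
lemma pot_chain (k : ℕ) (Cs : Fin (k + 1) → V → Bool)
    (h : ∀ i : Fin k, ∃ u, isFlip G τ (Cs i.castSucc) (Cs i.succ) u) :
    pot G τ (Cs (Fin.last k)) + 2 * (k : ℤ) ≤ pot G τ (Cs 0) := by
  induction k with
  | zero => simp [Fin.last]
  | succ k ih =>
    have h1 := ih (fun i => Cs i.castSucc) (fun i => by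
      obtain ⟨u, hu⟩ := h i.castSucc
      refine ⟨u, ?_⟩
      simpa only [Fin.succ_castSucc] using hu)
    obtain ⟨u, hu⟩ := h (Fin.last k)
    have h2 := pot_decrease G τ _ _ u hu
    rw [Fin.succ_last] at h2
    simp only [Fin.castSucc_zero] at h1
    push_cast
    have : (fun i => Cs i.castSucc) (Fin.last k) = Cs (Fin.last k).castSucc := rfl
    linarith [h1, h2]

/-- reachability of a fixed point -/
lemma reach_aux (C : V → Bool) :
    ∃ (k : ℕ) (Cs : Fin (k + 1) → V → Bool),
      Cs 0 = C ∧ (∀ i : Fin k, ∃ u, isFlip G τ (Cs i.castSucc) (Cs i.succ) u) ∧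
      snFixed G τ (Cs (Fin.last k)) := by
  classical
  set L : ℤ := ∑ v : V, min 0 (2 * (2 * (τ v : ℤ) - 1 - degI G v)) with hL
  suffices H : ∀ M : ℕ, ∀ C : V → Bool, (pot G τ C - L).toNat < M →
      ∃ (k : ℕ) (Cs : Fin (k + 1) → V → Bool),
        Cs 0 = C ∧ (∀ i : Fin k, ∃ u, isFlip G τ (Cs i.castSucc) (Cs i.succ) u) ∧
        snFixed G τ (Cs (Fin.last k)) by
    exact H ((pot G τ C - L).toNat + 1) C (Nat.lt_succ_self _)
  intro M
  induction M with
  | zero => intro C hC; omega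
  | succ M ih =>
    intro C hC
    by_cases hfix : snFixed G τ C
    · exact ⟨0, fun _ => C, rfl, fun i => i.elim0, by simpa [Fin.last]⟩
    · have hfix' : ∃ v, ¬(C v = true ↔ τ v ≤ {u | G.Adj v u ∧ C u = false}.ncard) := by
        rw [snFixed] at hfix
        exact not_forall.mp hfix
      obtain ⟨u, hu⟩ := hfix'
      set Ct := Function.update C u (!C u) with hCt
      have hflip : isFlip G τ C Ct u := by
        refine ⟨rfl, ?_⟩
        have hCtu : Ct u = !C u := by rw [hCt]; simp
        rw [hCtu]
        cases hcu : C u with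
        | false =>
          rw [hcu] at hu
          have hP : τ u ≤ {w | G.Adj u w ∧ C w = false}.ncard := by
            by_contra hP
            exact hu (iff_of_false (by simp) hP)
          exact iff_of_true rfl hP
        | true =>
          rw [hcu] at hu
          have hP : ¬ τ u ≤ {w | G.Adj u w ∧ C w = false}.ncard :=
            fun hP => hu (iff_of_true rfl hP)
          exact iff_of_false (by simp) hP
      have hdec := pot_decrease G τ C Ct u hflip
      have hlow := pot_lower G τ Ct
      rw [← hL] at hlow
      have hmeas : (pot G τ Ct - L).toNat < M := by omega
      obtain ⟨k', Cs', h0, hfl, hfx⟩ := ih Ct hmeas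
      refine ⟨k' + 1, Fin.cons C Cs', Fin.cons_zero _ _, ?_, ?_⟩
      · intro i
        refine Fin.cases ?_ ?_ i
        · refine ⟨u, ?_⟩
          simp only [Fin.castSucc_zero, Fin.cons_zero, Fin.succ_zero_eq_one]
          have e2 : (Fin.cons C Cs' : Fin (k' + 1 + 1) → V → Bool) 1 = Cs' 0 := by
            rw [show (1 : Fin (k' + 1 + 1)) = (0 : Fin (k' + 1)).succ by simp, Fin.cons_succ]
          rw [e2, h0]
          exact hflip
        · intro j
          obtain ⟨u', hu'⟩ := hfl j
          refine ⟨u', ?_⟩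
          simp only [← Fin.succ_castSucc, Fin.cons_succ]
          exact hu'
      · rw [show Fin.last (k' + 1) = (Fin.last k').succ from (Fin.succ_last k').symm,
          Fin.cons_succ]
        exact hfx

end Aux

/-- Every sequence of best-response flips has length at most `3m - n`; consequently, from
any initial configuration the sequential SN inverted-threshold dynamics reaches a fixed
point after at most `3m - n` state changes. -/
theorem stmt7 {V : Type*} [Fintype V] [DecidableEq V] (G : SimpleGraph V) (τ : V → ℕ)
    (hτ : ∀ v, 1 ≤ τ v ∧ τ v ≤ deg G v) :
    (∀ (k : ℕ) (Cs : Fin (k + 1) → V → Bool),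
        (∀ i : Fin k, ∃ u, isFlip G τ (Cs i.castSucc) (Cs i.succ) u) →
        (k : ℤ) ≤ 3 * (G.edgeSet.ncard : ℤ) - (Fintype.card V : ℤ)) ∧
    (∀ C : V → Bool, ∃ (k : ℕ) (Cs : Fin (k + 1) → V → Bool),
        Cs 0 = C ∧
        (∀ i : Fin k, ∃ u, isFlip G τ (Cs i.castSucc) (Cs i.succ) u) ∧
        snFixed G τ (Cs (Fin.last k)) ∧
        (k : ℤ) ≤ 3 * (G.edgeSet.ncard : ℤ) - (Fintype.card V : ℤ)) := by
  have part1 : ∀ (k : ℕ) (Cs : Fin (k + 1) → V → Bool),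
      (∀ i : Fin k, ∃ u, isFlip G τ (Cs i.castSucc) (Cs i.succ) u) →
      (k : ℤ) ≤ 3 * (G.edgeSet.ncard : ℤ) - (Fintype.card V : ℤ) := by
    intro k Cs h
    have hchain := pot_chain G τ k Cs h
    have hrange := pot_range G τ hτ (Cs 0) (Cs (Fin.last k))
    linarith
  refine ⟨part1, fun C => ?_⟩
  obtain ⟨k, Cs, h0, hfl, hfx⟩ := reach_aux G τ C
  exact ⟨k, Cs, h0, hfl, hfx, part1 k Cs hfl⟩
end

section
/- For every finite simple undirected graph G = (V,E) and every threshold function τ : V → ℕ, there exists a configuration C : V → {0,1} such that for every vertex v, C(v) = 1 if and only if |{u ∈ N(v) : C(u) = 0}| ≥ τ(v). That is, every self non-essential inverted-threshold system has a fixed point; equivalently, every self non-essential anti-coordination game has a pure Nash equilibrium. -/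
open Finset

namespace Stmt8

open Classical in
noncomputable def ee {V : Type*} (G : SimpleGraph V) (C : V → Bool) (u w : V) : ℤ :=
  if G.Adj u w ∧ C u ≠ C w then 1 else 0

noncomputable def opp {V : Type*} [Fintype V] (G : SimpleGraph V) (C : V → Bool) (v : V) : ℤ :=
  ∑ u, ee G C v u

open Classical in
noncomputable def dd {V : Type*} [Fintype V] (G : SimpleGraph V) (v : V) : ℤ :=
  ∑ u, if G.Adj v u then 1 else 0

open Classical in
noncomputable def zz {V : Type*} [Fintype V] (G : SimpleGraph V) (C : V → Bool) (v : V) : ℤ :=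
  ∑ u, if G.Adj v u ∧ C u = false then 1 else 0

noncomputable def tt {V : Type*} [Fintype V] (G : SimpleGraph V) (τ : V → ℕ)
    (C : V → Bool) (v : V) : ℤ :=
  if C v = true then (τ v : ℤ) else dd G v - τ v + 1

noncomputable def Phi {V : Type*} [Fintype V] (G : SimpleGraph V) (τ : V → ℕ)
    (C : V → Bool) : ℤ :=
  (∑ u, ∑ w, ee G C u w) - ∑ v, 2 * tt G τ C v

set_option linter.unusedSectionVars false
variable {V : Type*} [Fintype V] [DecidableEq V] (G : SimpleGraph V)

lemma ee_symm (C : V → Bool) (u w : V) : ee G C u w = ee G C w u := by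
  classical
  simp only [ee]
  exact if_congr ⟨fun ⟨h1, h2⟩ => ⟨h1.symm, h2.symm⟩, fun ⟨h1, h2⟩ => ⟨h1.symm, h2.symm⟩⟩ rfl rfl

lemma ee_self (C : V → Bool) (v : V) : ee G C v v = 0 := by
  classical
  simp [ee]

lemma P_decomp (C : V → Bool) (v : V) :
    (∑ u, ∑ w, ee G C u w) =
      2 * opp G C v + ∑ u ∈ univ.erase v, ∑ w ∈ univ.erase v, ee G C u w := by
  classical
  have h1 : (∑ u, ∑ w, ee G C u w)
      = (∑ w, ee G C v w) + ∑ u ∈ univ.erase v, ∑ w, ee G C u w :=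
    (Finset.add_sum_erase _ _ (mem_univ v)).symm
  have h2 : ∀ u : V, (∑ w, ee G C u w) = ee G C u v + ∑ w ∈ univ.erase v, ee G C u w :=
    fun u => (Finset.add_sum_erase _ _ (mem_univ v)).symm
  have h3 : (∑ u ∈ univ.erase v, ee G C u v) = opp G C v := by
    rw [show opp G C v = ∑ u, ee G C u v by
      unfold opp; exact Finset.sum_congr rfl fun u _ => ee_symm G C v u]
    rw [← Finset.add_sum_erase _ (fun u => ee G C u v) (mem_univ v), ee_self]
    ring
  calc (∑ u, ∑ w, ee G C u w)
      = (∑ w, ee G C v w) + ∑ u ∈ univ.erase v, (ee G C u v + ∑ w ∈ univ.erase v, ee G C u w) := by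
        rw [h1]; exact congrArg _ (Finset.sum_congr rfl fun u _ => h2 u)
    _ = opp G C v + ((∑ u ∈ univ.erase v, ee G C u v)
          + ∑ u ∈ univ.erase v, ∑ w ∈ univ.erase v, ee G C u w) := by
        rw [Finset.sum_add_distrib]; rfl
    _ = 2 * opp G C v + ∑ u ∈ univ.erase v, ∑ w ∈ univ.erase v, ee G C u w := by
        rw [h3]; ring

lemma opp_update (C : V → Bool) (v : V) :
    opp G (Function.update C v (!C v)) v = dd G v - opp G C v := by
  classical
  have : ∀ u : V, ee G (Function.update C v (!C v)) v u
      = (if G.Adj v u then 1 else 0) - ee G C v u := by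
    intro u
    by_cases huv : u = v
    · subst huv; simp [ee, ee_self]
    · by_cases ha : G.Adj v u
      · simp only [ee, Function.update_of_ne huv, Function.update_self]
        cases hCv : C v <;> cases hCu : C u <;> simp [ha, hCv, hCu]
      · simp [ee, ha]
  unfold opp dd
  rw [Finset.sum_congr rfl fun u _ => this u, Finset.sum_sub_distrib]

lemma opp_eq (C : V → Bool) (v : V) :
    opp G C v = if C v = true then zz G C v else dd G v - zz G C v := by
  classical
  cases hCv : C v
  · simp only [Bool.false_eq_true, if_false]
    unfold opp dd zz
    rw [← Finset.sum_sub_distrib]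
    refine Finset.sum_congr rfl fun u _ => ?_
    by_cases ha : G.Adj v u
    · cases hCu : C u <;> simp [ee, ha, hCv, hCu]
    · simp [ee, ha]
  · simp only [if_true]
    unfold opp zz
    refine Finset.sum_congr rfl fun u _ => ?_
    by_cases ha : G.Adj v u
    · cases hCu : C u <;> simp [ee, ha, hCv, hCu]
    · simp [ee, ha]

lemma T_decomp (τ : V → ℕ) (C : V → Bool) (v : V) :
    (∑ u, 2 * tt G τ C u) = 2 * tt G τ C v + ∑ u ∈ univ.erase v, 2 * tt G τ C u :=
  (Finset.add_sum_erase _ _ (mem_univ v)).symm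

lemma flip_delta (τ : V → ℕ) (C : V → Bool) (v : V) :
    Phi G τ (Function.update C v (!C v)) - Phi G τ C =
      if C v = true then -(4 * (zz G C v - τ v) + 2) else 4 * (zz G C v - τ v) + 2 := by
  classical
  set C' := Function.update C v (!C v) with hC'
  have hQ : (∑ u ∈ univ.erase v, ∑ w ∈ univ.erase v, ee G C' u w)
      = ∑ u ∈ univ.erase v, ∑ w ∈ univ.erase v, ee G C u w := by
    refine Finset.sum_congr rfl fun u hu => Finset.sum_congr rfl fun w hw => ?_
    simp only [ee, hC', Function.update_of_ne (Finset.mem_erase.1 hu).1,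
      Function.update_of_ne (Finset.mem_erase.1 hw).1]
  have hT : (∑ u ∈ univ.erase v, 2 * tt G τ C' u) = ∑ u ∈ univ.erase v, 2 * tt G τ C u := by
    refine Finset.sum_congr rfl fun u hu => ?_
    simp only [tt, hC', Function.update_of_ne (Finset.mem_erase.1 hu).1]
  have hzz : zz G C' v = zz G C v := by
    unfold zz
    refine Finset.sum_congr rfl fun u _ => ?_
    by_cases huv : u = v
    · simp [huv, SimpleGraph.irrefl]
    · simp [hC', Function.update_of_ne huv]
  have h6 := opp_eq G C v
  have h7 := opp_eq G C' v
  rw [hzz] at h7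
  have hC'v : C' v = !C v := Function.update_self v (!C v) C
  unfold Phi
  rw [P_decomp G C v, P_decomp G C' v, T_decomp G τ C v, T_decomp G τ C' v, hQ, hT]
  cases hCv : C v
  · rw [hCv] at hC'v
    simp only [Bool.not_false] at hC'v
    have h8 : tt G τ C' v = τ v := by simp [tt, hC'v]
    have h9 : tt G τ C v = dd G v - τ v + 1 := by simp [tt, hCv]
    rw [hC'v] at h7
    simp only [if_true] at h7
    rw [hCv] at h6
    simp only [Bool.false_eq_true, if_false] at h6 ⊢
    rw [h7, h8, h9, h6]; ring
  · rw [hCv] at hC'v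
    simp only [Bool.not_true] at hC'v
    have h8 : tt G τ C' v = dd G v - τ v + 1 := by simp [tt, hC'v]
    have h9 : tt G τ C v = τ v := by simp [tt, hCv]
    rw [hC'v] at h7
    simp only [Bool.false_eq_true, if_false] at h7
    rw [hCv] at h6
    simp only [if_true] at h6 ⊢
    rw [h7, h8, h9, h6]; ring
end Stmt8

/-- Every self non-essential inverted-threshold system on a finite simple undirected graph
has a fixed point: there is a configuration `C` with `C v = 1` iff at least `τ v` neighbors
of `v` have state `0`. Equivalently, every self non-essential anti-coordination game has a
pure Nash equilibrium. -/
theorem stmt8 {V : Type*} [Fintype V] (G : SimpleGraph V) (τ : V → ℕ) :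
    ∃ C : V → Bool, ∀ v, (C v = true ↔ τ v ≤ {u | G.Adj v u ∧ C u = false}.ncard) := by
  classical
  obtain ⟨C, hC⟩ := Finite.exists_max (Stmt8.Phi G τ)
  refine ⟨C, fun v => ?_⟩
  have hflip : Stmt8.Phi G τ (Function.update C v (!C v)) - Stmt8.Phi G τ C ≤ 0 := by
    have := hC (Function.update C v (!C v)); linarith
  have hdelta := Stmt8.flip_delta G τ C v
  have hzcard : (({u | G.Adj v u ∧ C u = false}).ncard : ℤ) = Stmt8.zz G C v := by
    rw [Set.ncard_eq_toFinset_card']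
    simp only [Set.toFinset_setOf]
    rw [Stmt8.zz, Finset.sum_boole]
  cases hCv : C v
  · rw [hCv] at hdelta hflip
    simp only [Bool.false_eq_true, if_false] at hdelta
    rw [hdelta] at hflip
    simp only [Bool.false_eq_true, false_iff]
    intro hle
    have : (τ v : ℤ) ≤ Stmt8.zz G C v := by
      rw [← hzcard]; exact_mod_cast hle
    omega
  · rw [hCv] at hdelta hflip
    simp only [if_true] at hdelta
    rw [hdelta] at hflip
    simp only [true_iff]
    have : (τ v : ℤ) ≤ Stmt8.zz G C v := by omega
    rw [← hzcard] at this
    exact_mod_cast this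
end

section
/- Let G = (V,E) be a finite simple undirected graph with no isolated vertices and thresholds τ : V → ℕ such that every vertex v has τ(v) ∈ {1, d(v) + 1}. Call v a nand vertex if τ(v) = 1 and a nor vertex if τ(v) = d(v) + 1, and let C be the configuration with C(v) = 1 for every nand vertex and C(v) = 0 for every nor vertex. Then C is a fixed point of the self essential (SE) inverted-threshold update if and only if every nor vertex is adjacent to at least one nand vertex and every nand vertex is adjacent to at least one nor vertex. -/
/-- Self essential (SE) inverted-threshold update: `F C v = true` iff the number of
vertices in the closed neighborhood of `v` with state `0` (i.e. `false`) is at least `τ v`. -/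
noncomputable def seF {V : Type*} (G : SimpleGraph V) (τ : V → ℕ) (C : V → Bool) : V → Bool :=
  fun v => decide (τ v ≤ {u | (G.Adj v u ∨ u = v) ∧ C u = false}.ncard)

/-- On a graph with no isolated vertices in which every vertex is a nand vertex
(`τ v = 1`) or a nor vertex (`τ v = d(v) + 1`), the configuration assigning `1` to nand
vertices and `0` to nor vertices is a fixed point of the SE inverted-threshold update iff
every nor vertex is adjacent to a nand vertex and every nand vertex is adjacent to a nor
vertex. -/
theorem stmt9 {V : Type*} [Fintype V] (G : SimpleGraph V) (τ : V → ℕ)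
    (hiso : ∀ v : V, ∃ u, G.Adj v u)
    (hτ : ∀ v : V, τ v = 1 ∨ τ v = deg G v + 1) :
    seF G τ (fun v => decide (τ v = 1)) = (fun v => decide (τ v = 1)) ↔
      ((∀ v : V, τ v = deg G v + 1 → ∃ u, G.Adj v u ∧ τ u = 1) ∧
       (∀ v : V, τ v = 1 → ∃ u, G.Adj v u ∧ τ u = deg G u + 1)) := by
  classical
  have hd : ∀ v, 1 ≤ deg G v := by
    intro v
    obtain ⟨u, hu⟩ := hiso v
    have : 0 < (G.neighborSet v).ncard := (Set.ncard_pos (Set.toFinite _)).2 ⟨u, hu⟩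
    exact this
  have hne : ∀ v, τ v = deg G v + 1 → τ v ≠ 1 := by
    intro v h h1; have := hd v; omega
  have hSet : ∀ v : V,
      {u | (G.Adj v u ∨ u = v) ∧ ((fun w => decide (τ w = 1)) u = false)} =
      {u | (G.Adj v u ∨ u = v) ∧ τ u ≠ 1} := by
    intro v; ext u; simp
  have hF : ∀ v : V, seF G τ (fun w => decide (τ w = 1)) v =
      decide (τ v ≤ {u | (G.Adj v u ∨ u = v) ∧ τ u ≠ 1}.ncard) := by
    intro v; simp only [seF, hSet]
  have hN : ∀ v : V, {u | G.Adj v u ∨ u = v}.ncard = deg G v + 1 := by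
    intro v
    have heq : {u | G.Adj v u ∨ u = v} = insert v (G.neighborSet v) := by
      ext u
      simp [SimpleGraph.mem_neighborSet, or_comm]
    rw [heq, Set.ncard_insert_of_notMem (by simp) (Set.toFinite _), deg]
  have hsub : ∀ v : V, {u | (G.Adj v u ∨ u = v) ∧ τ u ≠ 1} ⊆ {u | G.Adj v u ∨ u = v} :=
    fun v u hu => hu.1
  constructor
  · intro hfix
    constructor
    · intro v hv
      have h := congrFun hfix v
      rw [hF v] at h
      have hv1 := hne v hv
      rw [decide_eq_decide] at h
      have h' : ¬ (τ v ≤ {u | (G.Adj v u ∨ u = v) ∧ τ u ≠ 1}.ncard) :=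
        fun hc => hv1 (h.1 hc)
      by_contra hno
      push_neg at hno
      have hall : {u | (G.Adj v u ∨ u = v) ∧ τ u ≠ 1} = {u | G.Adj v u ∨ u = v} := by
        ext u
        simp only [Set.mem_setOf_eq, and_iff_left_iff_imp]
        rintro (hadj | rfl)
        · exact hno u hadj
        · exact hv1
      rw [hall, hN v, ← hv] at h'
      exact h' le_rfl
    · intro v hv
      have h := congrFun hfix v
      rw [hF v] at h
      rw [decide_eq_decide] at h
      have h' : τ v ≤ {u | (G.Adj v u ∨ u = v) ∧ τ u ≠ 1}.ncard := h.2 hv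
      rw [hv] at h'
      have hnonempty : {u | (G.Adj v u ∨ u = v) ∧ τ u ≠ 1}.Nonempty :=
        (Set.ncard_pos (Set.toFinite _)).1 (by omega)
      obtain ⟨u, hu⟩ := hnonempty
      have huv : u ≠ v := by rintro rfl; exact hu.2 hv
      have hadj : G.Adj v u := hu.1.resolve_right huv
      exact ⟨u, hadj, (hτ u).resolve_left hu.2⟩
  · rintro ⟨hnor, hnand⟩
    funext v
    rw [hF v]
    rcases hτ v with hv | hv
    · obtain ⟨u, hadj, hu⟩ := hnand v hv
      have hmem : u ∈ {u | (G.Adj v u ∨ u = v) ∧ τ u ≠ 1} := ⟨Or.inl hadj, hne u hu⟩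
      have h1 : 1 ≤ {u | (G.Adj v u ∨ u = v) ∧ τ u ≠ 1}.ncard :=
        (Set.ncard_pos (Set.toFinite _)).2 ⟨u, hmem⟩
      rw [decide_eq_decide, hv]
      exact iff_of_true h1 rfl
    · obtain ⟨u, hadj, hu⟩ := hnor v hv
      have hv1 := hne v hv
      have hssub : {u | (G.Adj v u ∨ u = v) ∧ τ u ≠ 1} ⊂ {u | G.Adj v u ∨ u = v} := by
        refine ⟨hsub v, fun hcon => ?_⟩
        have : u ∈ {u | (G.Adj v u ∨ u = v) ∧ τ u ≠ 1} := hcon (Or.inl hadj)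
        exact this.2 hu
      have hlt := Set.ncard_lt_ncard hssub (Set.toFinite _)
      rw [hN v] at hlt
      rw [decide_eq_decide, hv]
      have := hd v
      constructor
      · intro hle; omega
      · intro h1; omega
end

section
/- Let G be a simple undirected graph that contains no cycle of even length. Then all cycles of G are pairwise edge-disjoint: for any two cycles c₁ and c₂ of G (closed walks with no repeated vertices other than their common endpoint, of length at least 3), if c₁ and c₂ share at least one edge, then c₁ and c₂ have the same set of edges. -/
namespace ECF

open SimpleGraph Walk

variable {V : Type*} {G : SimpleGraph V}

lemma mem_support_of_mem_edges' {x y : V} {p : G.Walk x y} {g : Sym2 V} {z : V}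
    (hg : g ∈ p.edges) (hz : z ∈ g) : z ∈ p.support := by
  induction g using Sym2.ind with
  | _ a b =>
    rw [Sym2.mem_iff] at hz
    rcases hz with rfl | rfl
    · exact p.fst_mem_support_of_mem_edges hg
    · exact p.snd_mem_support_of_mem_edges hg

lemma end_mem_support_tail {v u : V} (d : G.Walk v u) (h : v ≠ u) : u ∈ d.support.tail := by
  cases d with
  | nil => exact absurd rfl h
  | cons h' q => simpa using q.end_mem_support

lemma mem_support_tail_of_closed {w : V} (p : G.Walk w w) (hp : ¬ p.Nil) {x : V}
    (hx : x ∈ p.support) : x ∈ p.support.tail := by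
  cases p with
  | nil => exact absurd Walk.Nil.nil hp
  | cons h q =>
    rw [Walk.support_cons] at hx
    rcases List.mem_cons.1 hx with rfl | hx'
    · simpa using q.end_mem_support
    · simpa using hx'

lemma start_not_mem_support_tail {a b : V} {p : G.Walk a b} (hp : p.IsPath) :
    a ∉ p.support.tail := by
  have h := hp.support_nodup
  rw [p.support_eq_cons] at h
  exact (List.nodup_cons.1 h).1

/-- first-hit decomposition of a walk ending in `S` -/
lemma firstHit {x a : V} (q : G.Walk x a) (S : Set V) (ha : a ∈ S) :
    ∃ (v : V) (t : G.Walk x v) (d : G.Walk v a),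
      q = t.append d ∧ v ∈ S ∧ (∀ w ∈ t.support, w = v ∨ w ∉ S) ∧
      (∀ g ∈ t.edges, ∃ w, w ∈ g ∧ w ∉ S) := by
  revert ha
  induction q with
  | nil =>
    intro ha
    exact ⟨_, Walk.nil, Walk.nil, rfl, ha, by simp, by simp⟩
  | @cons p1 p2 p3 h q ih =>
    intro ha
    by_cases hx : p1 ∈ S
    · exact ⟨p1, Walk.nil, Walk.cons h q, by simp, hx, by simp, by simp⟩
    · obtain ⟨v, t, d, hq, hv, hsupp, hedge⟩ := ih ha
      refine ⟨v, Walk.cons h t, d, by rw [Walk.cons_append, hq], hv, ?_, ?_⟩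
      · intro w hw
        rw [Walk.support_cons] at hw
        rcases List.mem_cons.1 hw with rfl | hw'
        · exact Or.inr hx
        · exact hsupp w hw'
      · intro g hg
        rw [Walk.edges_cons] at hg
        rcases List.mem_cons.1 hg with rfl | hg'
        · exact ⟨p1, by simp, hx⟩
        · exact hedge g hg'

/-- decompose a walk at one of its edges -/
lemma edgeSplit {b a : V} (p : G.Walk b a) {f : Sym2 V} (hf : f ∈ p.edges) :
    ∃ (x y : V) (hxy : G.Adj x y) (p₁ : G.Walk b x) (p₂ : G.Walk y a),
      p = p₁.append (Walk.cons hxy p₂) ∧ f = s(x, y) := by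
  induction p with
  | nil => simp at hf
  | @cons r1 r2 r3 h q ih =>
    rw [Walk.edges_cons] at hf
    rcases List.mem_cons.1 hf with rfl | hf'
    · exact ⟨r1, r2, h, Walk.nil, q, by simp, rfl⟩
    · obtain ⟨x, y, hxy, p₁, p₂, hp, hfe⟩ := ih hf'
      exact ⟨x, y, hxy, Walk.cons h p₁, p₂, by rw [Walk.cons_append, hp], hfe⟩

lemma ne_of_isPath_of_mem_edges {u v : V} {r : G.Walk u v} {g : Sym2 V}
    (h : r.IsPath) (hg : g ∈ r.edges) : u ≠ v := by
  rintro rfl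
  cases r with
  | nil => simp at hg
  | cons h' q =>
    have hn := h.support_nodup
    rw [Walk.support_cons] at hn
    exact (List.nodup_cons.1 hn).1 q.end_mem_support

/-- From a path between two vertices of `S` containing an edge `f`, extract a
subpath between two distinct vertices of `S` containing `f`, all of whose other
vertices avoid `S`. -/
lemma arcExists {b a : V} (p : G.Walk b a) (hp : p.IsPath) (S : Set V)
    (hb : b ∈ S) (ha : a ∈ S) {f : Sym2 V} (hf : f ∈ p.edges) :
    ∃ (u v : V) (r : G.Walk u v), r.IsPath ∧ u ∈ S ∧ v ∈ S ∧ u ≠ v ∧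
      f ∈ r.edges ∧
      (∀ w ∈ r.support, w = u ∨ w = v ∨ w ∉ S) ∧
      (∀ g ∈ r.edges, g = f ∨ ∃ w, w ∈ g ∧ w ∉ S) := by
  obtain ⟨x, y, hxy, p₁, p₂, hpeq, hfe⟩ := edgeSplit p hf
  obtain ⟨v, t, d, hp2, hv, hsupp2, hedge2⟩ := firstHit p₂ S ha
  obtain ⟨u, t', d', hp1, hu, hsupp1, hedge1⟩ := firstHit p₁.reverse S hb
  have hrP : (t'.reverse.append (Walk.cons hxy t)).IsPath := by
    have hp1' : d'.reverse.append t'.reverse = p₁ := by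
      rw [← Walk.reverse_append, ← hp1, Walk.reverse_reverse]
    have hP : p = (d'.reverse.append (t'.reverse.append (Walk.cons hxy t))).append d := by
      rw [hpeq, hp2, ← hp1']
      simp only [← Walk.append_assoc, Walk.cons_append]
    rw [hP] at hp
    exact (hp.of_append_left).of_append_right
  have hfr : f ∈ (t'.reverse.append (Walk.cons hxy t)).edges := by
    rw [Walk.edges_append, Walk.edges_cons]
    simp [hfe]
  refine ⟨u, v, t'.reverse.append (Walk.cons hxy t), hrP, hu, hv,
    ne_of_isPath_of_mem_edges hrP hfr, hfr, ?_, ?_⟩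
  case _ => -- support
    intro z hz
    rw [Walk.mem_support_append_iff] at hz
    rcases hz with hz | hz
    · rw [Walk.support_reverse, List.mem_reverse] at hz
      rcases hsupp1 z hz with rfl | h
      · exact Or.inl rfl
      · exact Or.inr (Or.inr h)
    · rw [Walk.support_cons] at hz
      rcases List.mem_cons.1 hz with rfl | hz'
      · rcases hsupp1 z t'.start_mem_support with rfl | h
        · exact Or.inl rfl
        · exact Or.inr (Or.inr h)
      · rcases hsupp2 z hz' with rfl | h
        · exact Or.inr (Or.inl rfl)
        · exact Or.inr (Or.inr h)
  case _ => -- edges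
    intro g hg
    rw [Walk.edges_append, List.mem_append] at hg
    rcases hg with hg | hg
    · rw [Walk.edges_reverse, List.mem_reverse] at hg
      exact Or.inr (hedge1 g hg)
    · rw [Walk.edges_cons] at hg
      rcases List.mem_cons.1 hg with rfl | hg'
      · exact Or.inl hfe.symm
      · exact Or.inr (hedge2 g hg')

/-- Split a cycle at two distinct vertices of its support into two paths. -/
lemma cycleSplit {w u v : V} (c : G.Walk w w) (hc : c.IsCycle)
    (hu : u ∈ c.support) (hv : v ∈ c.support) (huv : u ≠ v) :
    ∃ (q₁ : G.Walk u v) (q₂ : G.Walk v u), q₁.IsPath ∧ q₂.IsPath ∧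
      (∀ g ∈ q₁.edges, g ∈ c.edges) ∧ (∀ g ∈ q₂.edges, g ∈ c.edges) ∧
      (∀ x ∈ q₁.support, x ∈ c.support) ∧ (∀ x ∈ q₂.support, x ∈ c.support) ∧
      (∀ g ∈ c.edges, g ∈ q₁.edges ∨ g ∈ q₂.edges) ∧
      q₁.length + q₂.length = c.length := by
  classical
  set c' := c.rotate u hu with hc'def
  have hc' : c'.IsCycle := hc.rotate hu
  have hrotS : c'.support.tail ~r c.support.tail := c.support_rotate u hu
  have hrotE : c'.edges ~r c.edges := c.rotate_edges u hu
  have hlen : c'.length = c.length := by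
    have h1 := congrArg Walk.length (c.take_spec hu)
    rw [Walk.length_append] at h1
    have h2 : c'.length
        = (c.dropUntil u hu).length + (c.takeUntil u hu).length := by
      rw [hc'def, Walk.rotate, Walk.length_append]
    omega
  have hmemS : ∀ x ∈ c'.support, x ∈ c.support := by
    intro x hx
    have hx' : x ∈ c'.support.tail :=
      mem_support_tail_of_closed c' hc'.not_nil hx
    have : x ∈ c.support.tail := hrotS.perm.mem_iff.1 hx'
    exact List.mem_of_mem_tail this
  have hmemE : ∀ g ∈ c'.edges, g ∈ c.edges := fun g hg => hrotE.perm.mem_iff.1 hg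
  have hmemE' : ∀ g ∈ c.edges, g ∈ c'.edges := fun g hg => hrotE.perm.mem_iff.2 hg
  have hvc' : v ∈ c'.support := by
    have h1 : v ∈ c.support.tail := mem_support_tail_of_closed c hc.not_nil hv
    have h2 : v ∈ c'.support.tail := hrotS.perm.mem_iff.2 h1
    exact List.mem_of_mem_tail h2
  obtain ⟨b, hadj, ct, hcteq⟩ : ∃ (b : V) (hadj : G.Adj u b) (ct : G.Walk b u),
      c' = Walk.cons hadj ct := by
    cases hec : c' with
    | nil => exact absurd (hec ▸ hc').ne_nil (by simp)
    | cons hadj ct => exact ⟨_, hadj, ct, rfl⟩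
  have hctP : ct.IsPath ∧ s(u, b) ∉ ct.edges :=
    (Walk.cons_isCycle_iff ct hadj).1 (hcteq ▸ hc')
  have hvct : v ∈ ct.support := by
    have := hcteq ▸ hvc'
    rw [Walk.support_cons] at this
    rcases List.mem_cons.1 this with rfl | h
    · exact absurd rfl huv
    · exact h
  set t := ct.takeUntil v hvct with htdef
  set dd := ct.dropUntil v hvct with hddef
  have hts : t.append dd = ct := ct.take_spec hvct
  have htP : t.IsPath := hctP.1.takeUntil hvct
  have hdP : dd.IsPath := hctP.1.dropUntil hvct
  have hut : u ∉ t.support := by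
    intro hut
    have hnd : (t.append dd).support.Nodup := hts ▸ hctP.1.support_nodup
    rw [Walk.support_append] at hnd
    have hdisj := List.disjoint_of_nodup_append hnd
    exact hdisj hut (end_mem_support_tail dd huv.symm)
  have hq1P : (Walk.cons hadj t).IsPath := htP.cons hut
  refine ⟨Walk.cons hadj t, dd, hq1P, hdP, ?_, ?_, ?_, ?_, ?_, ?_⟩
  · intro g hg
    rw [Walk.edges_cons] at hg
    apply hmemE
    rw [hcteq, Walk.edges_cons]
    rcases List.mem_cons.1 hg with rfl | hg'
    · exact List.mem_cons_self
    · exact List.mem_cons_of_mem _ (ct.edges_takeUntil_subset hvct hg')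
  · intro g hg
    apply hmemE
    rw [hcteq, Walk.edges_cons]
    exact List.mem_cons_of_mem _ (ct.edges_dropUntil_subset hvct hg)
  · intro x hx
    rw [Walk.support_cons] at hx
    apply hmemS
    rw [hcteq, Walk.support_cons]
    rcases List.mem_cons.1 hx with rfl | hx'
    · exact List.mem_cons_self
    · exact List.mem_cons_of_mem _ (ct.support_takeUntil_subset hvct hx')
  · intro x hx
    apply hmemS
    rw [hcteq, Walk.support_cons]
    exact List.mem_cons_of_mem _ (ct.support_dropUntil_subset hvct hx)
  · intro g hg
    have : g ∈ c'.edges := hmemE' g hg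
    rw [hcteq, Walk.edges_cons] at this
    rcases List.mem_cons.1 this with rfl | hg'
    · exact Or.inl (by rw [Walk.edges_cons]; exact List.mem_cons_self)
    · rw [← hts, Walk.edges_append, List.mem_append] at hg'
      rcases hg' with h | h
      · exact Or.inl (by rw [Walk.edges_cons]; exact List.mem_cons_of_mem _ h)
      · exact Or.inr h
  · have h1 := congrArg Walk.length hts
    rw [Walk.length_append] at h1
    have h2 := congrArg Walk.length hcteq
    rw [Walk.length_cons] at h2
    rw [Walk.length_cons]
    omega

/-- glue a nontrivial path and a returning path into a cycle -/
lemma buildCycle {u v : V} (r : G.Walk u v) (q : G.Walk v u) (hr : r.IsPath) (hq : q.IsPath)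
    (hlen : 0 < r.length)
    (hE : ∀ g ∈ r.edges, g ∉ q.edges)
    (hS : ∀ z ∈ r.support.tail, z ∉ q.support.tail) :
    (r.append q).IsCycle := by
  rw [Walk.isCycle_def]
  refine ⟨?_, ?_, ?_⟩
  · rw [Walk.isTrail_def, Walk.edges_append]
    exact List.Nodup.append hr.isTrail.edges_nodup hq.isTrail.edges_nodup hE
  · intro hn
    have := congrArg Walk.length hn
    rw [Walk.length_append] at this
    simp only [Walk.length_nil] at this
    omega
  · rw [Walk.tail_support_append]
    exact List.Nodup.append hr.support_nodup.tail hq.support_nodup.tail hS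

/-- key lemma: no path between two cycle vertices can use an edge outside the cycle -/
lemma noPath (hodd : ∀ (x : V) (c : G.Walk x x), c.IsCycle → Odd c.length)
    {w x y : V} (c₂ : G.Walk w w) (h₂ : c₂.IsCycle) (p : G.Walk x y) (hp : p.IsPath)
    (hx : x ∈ c₂.support) (hy : y ∈ c₂.support) {f : Sym2 V}
    (hf : f ∈ p.edges) (hfc : f ∉ c₂.edges) : False := by
  obtain ⟨u, v, r, hrP, hu, hv, hne, hfr, hrS, hrE⟩ :=
    arcExists p hp {z | z ∈ c₂.support} hx hy hf
  obtain ⟨q₁, q₂, h1P, h2P, h1E, h2E, h1S, h2S, _, hlen⟩ := cycleSplit c₂ h₂ hu hv hne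
  have hrlen : 0 < r.length := by
    have h0 : 0 < r.edges.length := List.length_pos_iff.2 (List.ne_nil_of_mem hfr)
    rwa [Walk.length_edges] at h0
  have hrDis : ∀ g ∈ r.edges, g ∉ c₂.edges := by
    intro g hg hgc
    rcases hrE g hg with rfl | ⟨z, hzg, hz⟩
    · exact hfc hgc
    · exact hz (mem_support_of_mem_edges' hgc hzg)
  have huR : u ∉ r.support.tail := start_not_mem_support_tail hrP
  have hC1 : (r.append q₂).IsCycle := by
    apply buildCycle r q₂ hrP h2P hrlen
    · intro g hg hg2; exact hrDis g hg (h2E g hg2)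
    · intro z hz hz2
      have hzS : z ∈ c₂.support := h2S z (List.mem_of_mem_tail hz2)
      rcases hrS z (List.mem_of_mem_tail hz) with rfl | rfl | hzn
      · exact huR hz
      · exact start_not_mem_support_tail h2P hz2
      · exact hzn hzS
  have hC2 : (r.append q₁.reverse).IsCycle := by
    apply buildCycle r q₁.reverse hrP h1P.reverse hrlen
    · intro g hg hg2
      rw [Walk.edges_reverse, List.mem_reverse] at hg2
      exact hrDis g hg (h1E g hg2)
    · intro z hz hz2
      have hz2' : z ∈ q₁.reverse.support := List.mem_of_mem_tail hz2
      rw [Walk.support_reverse, List.mem_reverse] at hz2'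
      have hzS : z ∈ c₂.support := h1S z hz2'
      rcases hrS z (List.mem_of_mem_tail hz) with rfl | rfl | hzn
      · exact huR hz
      · exact start_not_mem_support_tail h1P.reverse hz2
      · exact hzn hzS
  have o1 := hodd u (r.append q₂) hC1
  have o2 := hodd u (r.append q₁.reverse) hC2
  have o3 := hodd w c₂ h₂
  rw [Walk.length_append] at o1 o2
  rw [Walk.length_reverse] at o2
  rw [Nat.odd_iff] at o1 o2 o3
  omega

lemma subsetLemma (hodd : ∀ (x : V) (c : G.Walk x x), c.IsCycle → Odd c.length)
    {u w : V} (c₁ : G.Walk u u) (c₂ : G.Walk w w)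
    (h₁ : c₁.IsCycle) (h₂ : c₂.IsCycle) {e : Sym2 V}
    (he₁ : e ∈ c₁.edges) (he₂ : e ∈ c₂.edges) :
    ∀ f ∈ c₁.edges, f ∈ c₂.edges := by
  intro f hf
  by_contra hfc
  induction e using Sym2.ind with
  | _ a b =>
    have hab : G.Adj a b := c₁.adj_of_mem_edges he₁
    have ha1 := c₁.fst_mem_support_of_mem_edges he₁
    have hb1 := c₁.snd_mem_support_of_mem_edges he₁
    have ha2 := c₂.fst_mem_support_of_mem_edges he₂
    have hb2 := c₂.snd_mem_support_of_mem_edges he₂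
    obtain ⟨q₁, q₂, h1P, h2P, _, _, _, _, hcov, _⟩ := cycleSplit c₁ h₁ ha1 hb1 hab.ne
    rcases hcov f hf with h | h
    · exact noPath hodd c₂ h₂ q₁ h1P ha2 hb2 h hfc
    · exact noPath hodd c₂ h₂ q₂ h2P hb2 ha2 h hfc

end ECF

/-- In a simple undirected graph with no even cycle (every cycle has odd length), any two
cycles sharing an edge have exactly the same set of edges; i.e., all cycles are pairwise
edge-disjoint. -/
theorem stmt12 {V : Type*} (G : SimpleGraph V)
    (hodd : ∀ (x : V) (c : G.Walk x x), c.IsCycle → Odd c.length)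
    {u w : V} (c₁ : G.Walk u u) (c₂ : G.Walk w w)
    (h₁ : c₁.IsCycle) (h₂ : c₂.IsCycle)
    (hshare : ∃ e, e ∈ c₁.edges ∧ e ∈ c₂.edges) :
    ∀ e, e ∈ c₁.edges ↔ e ∈ c₂.edges := by
  obtain ⟨e, he₁, he₂⟩ := hshare
  intro g
  exact ⟨fun hg => ECF.subsetLemma hodd c₁ c₂ h₁ h₂ he₁ he₂ g hg,
         fun hg => ECF.subsetLemma hodd c₂ c₁ h₂ h₁ he₂ he₁ g hg⟩
end

section
/- Let K be the complete graph on a finite vertex set V with thresholds τ : V → ℕ, under the self essential (SE) inverted-threshold update (here the closed neighborhood of every vertex is all of V, so a configuration C is a fixed point iff for every v, C(v) = 1 ⟺ |{u ∈ V : C(u) = 0}| ≥ τ(v)). Then a fixed point exists if and only if there is a partition of V into two sets V′ and V″ such that τ(v) ≤ |V″| for every v ∈ V′ and |V″| < τ(v) for every v ∈ V″; moreover, for any such partition, the configuration equal to 1 on V′ and 0 on V″ is a fixed point, and every fixed point arises this way. -/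
open scoped Classical

/-- On the complete graph on `V` (where the closed neighborhood of every vertex is all of
`V`), `C` is a fixed point of the SE inverted-threshold update iff for every `v`,
`C v = 1 ⟺ τ v ≤ |{u : C u = 0}|`. -/
def kFixed {V : Type*} (τ : V → ℕ) (C : V → Bool) : Prop :=
  ∀ v, (C v = true ↔ τ v ≤ {u | C u = false}.ncard)

/-- `(V', V'')` is a partition of `V` with `τ v ≤ |V''|` for `v ∈ V'` and `|V''| < τ v`
for `v ∈ V''`. -/
def goodPart {V : Type*} (τ : V → ℕ) (V' V'' : Set V) : Prop :=
  V' ∪ V'' = Set.univ ∧ Disjoint V' V'' ∧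
    (∀ v ∈ V', τ v ≤ V''.ncard) ∧ (∀ v ∈ V'', V''.ncard < τ v)

lemma good_to_fixed {V : Type*} (τ : V → ℕ) (V' V'' : Set V) (h : goodPart τ V' V'') :
    kFixed τ (fun v => if v ∈ V' then true else false) := by
  obtain ⟨hu, hd, h1, h2⟩ := h
  have hmem : ∀ u : V, u ∉ V' ↔ u ∈ V'' := by
    intro u
    constructor
    · intro hn
      have : u ∈ V' ∪ V'' := hu ▸ Set.mem_univ u
      rcases this with h | h
      · exact absurd h hn
      · exact h
    · intro hu2 hu1
      exact (Set.disjoint_left.mp hd hu1) hu2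
  have hset : {u : V | (fun v => if v ∈ V' then true else false) u = false} = V'' := by
    ext u
    simp only [Set.mem_setOf_eq]
    by_cases hu' : u ∈ V' <;> simp [hu', ← hmem u]
  intro v
  rw [hset]
  by_cases hv : v ∈ V'
  · simp [hv, h1 v hv]
  · have hv'' : v ∈ V'' := (hmem v).mp hv
    simp [hv, Nat.not_le.mpr (h2 v hv'')]

lemma fixed_to_good {V : Type*} (τ : V → ℕ) (C : V → Bool) (h : kFixed τ C) :
    goodPart τ {v | C v = true} {v | C v = false} := by
  refine ⟨?_, ?_, ?_, ?_⟩
  · ext v; simp only [Set.mem_union, Set.mem_setOf_eq, Set.mem_univ, iff_true]; cases C v <;> simp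
  · rw [Set.disjoint_left]; intro v hv hv'
    simp only [Set.mem_setOf_eq] at hv hv'
    rw [hv] at hv'; exact Bool.true_eq_false.mp hv'
  · intro v hv; exact (h v).mp hv
  · intro v hv
    simp only [Set.mem_setOf_eq] at hv
    by_contra hc
    push_neg at hc
    have := (h v).mpr hc
    rw [hv] at this; exact Bool.false_eq_true.mp this

/-- On the complete graph with thresholds `τ`, a fixed point of the SE inverted-threshold
update exists iff `V` can be partitioned into `V'`, `V''` with `τ v ≤ |V''|` for all
`v ∈ V'` and `|V''| < τ v` for all `v ∈ V''`; moreover the configuration equal to `1` on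
`V'` and `0` on `V''` is then a fixed point, and every fixed point arises this way. -/
theorem stmt13 {V : Type*} [Fintype V] (τ : V → ℕ) :
    ((∃ C : V → Bool, kFixed τ C) ↔ ∃ V' V'' : Set V, goodPart τ V' V'') ∧
    (∀ V' V'' : Set V, goodPart τ V' V'' →
        kFixed τ (fun v => if v ∈ V' then true else false)) ∧
    (∀ C : V → Bool, kFixed τ C →
        goodPart τ {v | C v = true} {v | C v = false}) := by
  refine ⟨⟨?_, ?_⟩, fun V' V'' h => good_to_fixed τ V' V'' h,
    fun C h => fixed_to_good τ C h⟩
  · rintro ⟨C, hC⟩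
    exact ⟨_, _, fixed_to_good τ C hC⟩
  · rintro ⟨V', V'', h⟩
    exact ⟨_, good_to_fixed τ V' V'' h⟩
end

section
/- Let G = (V,E) be a finite simple undirected graph with thresholds τ : V → ℕ satisfying 1 ≤ τ(v) ≤ d(v) for every vertex v. Then for every configuration C, the synchronous configuration potential satisfies P(C) ≤ 0. -/
open scoped Classical
open Finset


/-- Self non-essential (SN) inverted-threshold update: `F C v = true` iff the number of
neighbors of `v` with state `0` (i.e. `false`) is at least `τ v`. -/
noncomputable def snF {V : Type*} (G : SimpleGraph V) (τ : V → ℕ) (C : V → Bool) : V → Bool :=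
  fun v => decide (τ v ≤ {u | G.Adj v u ∧ C u = false}.ncard)

/-- Identify the states `0`/`1` with the rationals `0`/`1`. -/
def val : Bool → ℚ := fun b => if b then 1 else 0

/-- `τ̃0(v) = τ0(v) - 1/2 = (d(v) + 1 - τ(v)) - 1/2 ∈ ℚ`. -/
noncomputable def ttau0 {V : Type*} (G : SimpleGraph V) (τ : V → ℕ) (v : V) : ℚ :=
  ((deg G v : ℚ) + 1 - (τ v : ℚ)) - 1 / 2

/-- The synchronous configuration potential
`P(C) = Σ_{{u,v} ∈ E} (C(u)·C'(v) + C(v)·C'(u)) − Σ_v (C(v) + C'(v))·τ̃0(v)`,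
where `C' = F(C)` is the SN inverted-threshold successor of `C`. -/
noncomputable def synPot {V : Type*} [Fintype V] (G : SimpleGraph V) (τ : V → ℕ)
    (C : V → Bool) : ℚ :=
  (∑ e ∈ G.edgeFinset,
      Sym2.lift
        ⟨fun u w => val (C u) * val (snF G τ C w) + val (C w) * val (snF G τ C u),
         fun _ _ => by ring⟩ e)
    - ∑ v, (val (C v) + val (snF G τ C v)) * ttau0 G τ v

lemma dartSum {V : Type*} [Fintype V] (G : SimpleGraph V) (f : V → V → ℚ) :
    (∑ e ∈ G.edgeFinset,
      Sym2.lift ⟨fun u w => f u w + f w u, fun _ _ => by ring⟩ e)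
      = ∑ d : G.Dart, f d.fst d.snd := by
  classical
  rw [← Finset.sum_fiberwise_of_maps_to (t := G.edgeFinset) (g := SimpleGraph.Dart.edge)
      (fun d _ => by rw [SimpleGraph.mem_edgeFinset]; exact d.edge_mem)
      (fun d : G.Dart => f d.fst d.snd)]
  refine Finset.sum_congr rfl fun e he => ?_
  rw [SimpleGraph.mem_edgeFinset] at he
  induction' e with v w
  have h : G.Adj v w := he
  let d : G.Dart := ⟨(v, w), h⟩
  have hfib : (Finset.univ.filter fun d' : G.Dart => d'.edge = d.edge) = {d, d.symm} := by
    have := d.edge_fiber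
    simpa [Finset.filter_congr_decidable] using this
  have hd : d.edge = s(v, w) := rfl
  rw [Sym2.lift_mk, ← hd, hfib, Finset.sum_pair d.symm_ne.symm]
  rfl

lemma dartSum2 {V : Type*} [Fintype V] (G : SimpleGraph V) (f : V → V → ℚ) :
    (∑ d : G.Dart, f d.fst d.snd) = ∑ v, ∑ u ∈ G.neighborFinset v, f v u := by
  classical
  rw [← Finset.sum_fiberwise_of_maps_to (t := Finset.univ) (g := fun d : G.Dart => d.fst)
      (fun d _ => Finset.mem_univ d.fst)
      (fun d : G.Dart => f d.fst d.snd)]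
  refine Finset.sum_congr rfl fun v _ => ?_
  rw [show (Finset.univ.filter fun d : G.Dart => d.fst = v) = Finset.univ.image (G.dartOfNeighborSet v) from by simpa using G.dart_fst_fiber v,
    Finset.sum_image (fun a _ b _ hab => G.dartOfNeighborSet_injective v hab)]
  rw [show (G.neighborFinset v) = Finset.univ.image (Subtype.val : G.neighborSet v → V) from ?_]
  · rw [Finset.sum_image (fun a _ b _ hab => Subtype.val_injective hab)]
    rfl
  · ext u; simp [SimpleGraph.mem_neighborFinset, SimpleGraph.mem_neighborSet]

/-- Upper bound on the synchronous configuration potential: `P(C) ≤ 0`. -/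
theorem stmt15 {V : Type*} [Fintype V] (G : SimpleGraph V) (τ : V → ℕ)
    (hτ : ∀ v, 1 ≤ τ v ∧ τ v ≤ deg G v) (C : V → Bool) :
    synPot G τ C ≤ 0 := by
  classical
  have hdeg : ∀ v, deg G v = G.degree v := by
    intro v
    have h2 : (G.neighborSet v).toFinset = G.neighborFinset v := by
      ext u; simp
    rw [deg, Set.ncard_eq_toFinset_card', h2, SimpleGraph.degree]
  set z : V → ℕ := fun v => ((G.neighborFinset v).filter (fun u => C u = false)).card with hz
  have hsnF : ∀ v, snF G τ C v = true ↔ τ v ≤ z v := by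
    intro v
    rw [snF]
    simp only [decide_eq_true_eq]
    have : {u | G.Adj v u ∧ C u = false}.ncard = z v := by
      rw [Set.ncard_eq_toFinset_card', hz]
      congr 1
      ext u
      simp [SimpleGraph.mem_neighborFinset]
    rw [this]
  have hzle : ∀ v, z v ≤ G.degree v := fun v =>
    (Finset.card_filter_le _ _).trans_eq rfl
  have hsplit : ∀ v, (∑ u ∈ G.neighborFinset v, val (C u)) = (G.degree v : ℚ) - (z v : ℚ) := by
    intro v
    rw [SimpleGraph.degree, ← Finset.card_filter_add_card_filter_not
      (s := G.neighborFinset v) (p := fun u => C u = false)]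
    push_cast
    rw [Finset.sum_congr rfl (g := fun u => if C u = false then (0:ℚ) else 1)
      (fun u _ => by cases hCu : C u <;> simp [_root_.val, hCu]),
      Finset.sum_ite, Finset.sum_const, Finset.sum_const]
    simp [hz]
  have hsymm : (∑ d : G.Dart, val (C d.fst) * val (snF G τ C d.snd))
      = ∑ d : G.Dart, val (C d.snd) * val (snF G τ C d.fst) :=
    Finset.sum_nbij' (fun d => d.symm) (fun d => d.symm)
      (by simp) (by simp) (by simp) (by simp) (fun d _ => rfl)
  rw [synPot, dartSum G (fun u w => val (C u) * val (snF G τ C w)), hsymm,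
    dartSum2 G (fun v u => val (C u) * val (snF G τ C v))]
  rw [← Finset.sum_sub_distrib]
  apply Finset.sum_nonpos
  intro v _
  rw [← Finset.sum_mul, hsplit v]
  -- per-vertex bound
  have ht1 : (1:ℚ) ≤ (τ v : ℚ) := by exact_mod_cast (hτ v).1
  have ht2 : (τ v : ℚ) ≤ (G.degree v : ℚ) := by
    have := (hτ v).2; rw [hdeg v] at this; exact_mod_cast this
  have htt : ttau0 G τ v = (G.degree v : ℚ) + 1 - (τ v : ℚ) - 1/2 := by
    rw [ttau0, hdeg v]
  have hCv : (0:ℚ) ≤ val (C v) := by cases C v <;> simp [_root_.val]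
  have hzd : (z v : ℚ) ≤ (G.degree v : ℚ) := by exact_mod_cast hzle v
  cases h' : snF G τ C v with
  | false =>
    rw [show _root_.val false = 0 from rfl, htt]
    nlinarith
  | true =>
    have hτz : (τ v : ℚ) ≤ (z v : ℚ) := by exact_mod_cast (hsnF v).1 h'
    rw [show _root_.val true = 1 from rfl, htt]
    nlinarith
end

section
/- Let G = (V,E) be a finite simple undirected graph with thresholds τ : V → ℕ satisfying 1 ≤ τ(v) ≤ d(v) for every vertex v, and let F be the self non-essential inverted-threshold synchronous update. For any configuration C, let Δ = P(F(C)) − P(C) be the change in the synchronous configuration potential. Then Δ = 0 if and only if F(F(C)) = C (i.e., C is a fixed point of F or lies on a 2-cycle of F); and if F(F(C)) ≠ C, then Δ ≤ −1/2. -/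
open scoped Classical

lemma val_true : val true = 1 := rfl

lemma val_false : val false = 0 := rfl

section Aux

variable {V : Type*} [Fintype V]

/-- Sum of a symmetric bilinear-type function over edges equals a fiberwise vertex sum. -/
lemma edge_sum_eq (G : SimpleGraph V) (A B : V → ℚ) :
    (∑ e ∈ G.edgeFinset,
        Sym2.lift ⟨fun u w => A u * B w + A w * B u, fun _ _ => by ring⟩ e)
      = ∑ v, A v * ∑ u ∈ G.neighborFinset v, B u := by
  classical
  have hdart : (∑ d : G.Dart, A d.fst * B d.snd)
      = ∑ e ∈ G.edgeFinset,
          Sym2.lift ⟨fun u w => A u * B w + A w * B u, fun _ _ => by ring⟩ e := by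
    rw [← Finset.sum_fiberwise_of_maps_to
      (g := SimpleGraph.Dart.edge) (t := G.edgeFinset)
      (fun d _ => SimpleGraph.mem_edgeFinset.2 d.edge_mem)]
    refine Finset.sum_congr rfl ?_
    intro e he
    rw [SimpleGraph.mem_edgeFinset] at he
    induction e with
    | _ a b =>
      have hadj : G.Adj a b := he
      set d : G.Dart := ⟨(a, b), hadj⟩ with hd
      have hfib : (Finset.univ.filter fun d' : G.Dart => d'.edge = s(a, b)) = {d, d.symm} := by
        have := d.edge_fiber
        rw [show d.edge = s(a, b) from rfl] at this
        simpa using this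
      rw [hfib, Finset.sum_pair d.symm_ne.symm]
      simp [d, SimpleGraph.Dart.symm, Sym2.lift_mk]
  rw [← hdart, ← Finset.sum_fiberwise_of_maps_to
      (g := fun d : G.Dart => d.fst) (t := Finset.univ) (fun d _ => Finset.mem_univ _)]
  refine Finset.sum_congr rfl ?_
  intro v _
  rw [Finset.mul_sum]
  refine Finset.sum_bij' (i := fun (d : G.Dart) _ => d.snd)
    (j := fun u hu => (⟨(v, u), (SimpleGraph.mem_neighborFinset _ _ _).1 hu⟩ : G.Dart))
    ?_ ?_ ?_ ?_ ?_
  · intro d hd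
    simp only [Finset.mem_filter, Finset.mem_univ, true_and] at hd
    subst hd
    exact (SimpleGraph.mem_neighborFinset _ _ _).2 d.adj
  · intro u hu
    simp
  · intro d hd
    simp only [Finset.mem_filter, Finset.mem_univ, true_and] at hd
    subst hd
    exact SimpleGraph.Dart.ext _ _ rfl
  · intro u hu
    rfl
  · intro d hd
    simp only [Finset.mem_filter, Finset.mem_univ, true_and] at hd
    rw [hd]

variable (G : SimpleGraph V) (τ : V → ℕ)

lemma deg_eq_card (v : V) : deg G v = (G.neighborFinset v).card := by
  rw [deg, SimpleGraph.neighborFinset_def, Set.ncard_eq_toFinset_card']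

lemma snF_iff (C : V → Bool) (v : V) :
    snF G τ C v = true ↔
      τ v ≤ ((G.neighborFinset v).filter fun u => C u = false).card := by
  rw [snF, decide_eq_true_iff]
  have : {u | G.Adj v u ∧ C u = false}
      = ↑((G.neighborFinset v).filter fun u => C u = false) := by
    ext u; simp [SimpleGraph.mem_neighborFinset]
  rw [this, Set.ncard_coe_finset]

lemma nsum_eq (C : V → Bool) (v : V) :
    (∑ u ∈ G.neighborFinset v, val (C u)) = (deg G v : ℚ)
      - (((G.neighborFinset v).filter fun u => C u = false).card : ℚ) := by
  classical
  have h1 : (∑ u ∈ G.neighborFinset v, val (C u))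
      = (((G.neighborFinset v).filter fun u => C u = true).card : ℚ) := by
    rw [← Finset.sum_boole]
    refine Finset.sum_congr rfl fun u _ => ?_
    by_cases h : C u <;> simp [val, h]
  have h2 : ((G.neighborFinset v).filter fun u => C u = true).card
      + ((G.neighborFinset v).filter fun u => C u = false).card
      = deg G v := by
    rw [deg_eq_card]
    have := Finset.card_filter_add_card_filter_not
      (s := G.neighborFinset v) (p := fun u => C u = true)
    simpa using this
  rw [h1]
  have := congrArg (fun n : ℕ => (n : ℚ)) h2
  push_cast at this
  linarith

lemma key_true (C : V → Bool) (v : V) (h : snF G τ C v = true) :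
    (∑ u ∈ G.neighborFinset v, val (C u)) ≤ ttau0 G τ v - 1 / 2 := by
  rw [snF_iff] at h
  rw [nsum_eq, ttau0]
  have : (τ v : ℚ) ≤ (((G.neighborFinset v).filter fun u => C u = false).card : ℚ) := by
    exact_mod_cast h
  linarith

lemma key_false (C : V → Bool) (v : V) (h : snF G τ C v = false) :
    ttau0 G τ v + 1 / 2 ≤ ∑ u ∈ G.neighborFinset v, val (C u) := by
  have h' : ¬ (τ v ≤ ((G.neighborFinset v).filter fun u => C u = false).card) := by
    intro hh
    rw [(snF_iff G τ C v).2 hh] at h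
    simp at h
  push_neg at h'
  have : (((G.neighborFinset v).filter fun u => C u = false).card : ℚ) + 1 ≤ (τ v : ℚ) := by
    exact_mod_cast h'
  rw [nsum_eq, ttau0]
  linarith

/-- Representation of `synPot` grouping by the first (current) configuration. -/
lemma synPot_eq_a (C : V → Bool) :
    synPot G τ C
      = (∑ v, val (C v) * ∑ u ∈ G.neighborFinset v, val (snF G τ C u))
        - ∑ v, (val (C v) + val (snF G τ C v)) * ttau0 G τ v := by
  unfold synPot
  congr 1
  rw [← edge_sum_eq G (fun v => val (C v)) (fun v => val (snF G τ C v))]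

/-- Representation of `synPot` grouping by the successor configuration. -/
lemma synPot_eq_b (C : V → Bool) :
    synPot G τ C
      = (∑ v, val (snF G τ C v) * ∑ u ∈ G.neighborFinset v, val (C u))
        - ∑ v, (val (C v) + val (snF G τ C v)) * ttau0 G τ v := by
  unfold synPot
  congr 1
  rw [← edge_sum_eq G (fun v => val (snF G τ C v)) (fun v => val (C v))]
  refine Finset.sum_congr rfl fun e _ => ?_
  apply congrArg (fun f => Sym2.lift f e)
  exact Subtype.ext (funext fun u => funext fun w => by ring)

end Aux

/-- The change `Δ = P(F(C)) - P(C)` in the synchronous configuration potential is `0` iff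
`F(F(C)) = C` (i.e., `C` is a fixed point of `F` or lies on a 2-cycle of `F`); and if
`F(F(C)) ≠ C` then `Δ ≤ -1/2`. -/
theorem stmt16 {V : Type*} [Fintype V] (G : SimpleGraph V) (τ : V → ℕ)
    (hτ : ∀ v, 1 ≤ τ v ∧ τ v ≤ deg G v) (C : V → Bool) :
    (synPot G τ (snF G τ C) - synPot G τ C = 0 ↔ snF G τ (snF G τ C) = C) ∧
    (snF G τ (snF G τ C) ≠ C → synPot G τ (snF G τ C) - synPot G τ C ≤ -(1 / 2)) := by
  classical
  set term : V → ℚ := fun v =>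
    (val (snF G τ (snF G τ C) v) - val (C v)) *
      ((∑ u ∈ G.neighborFinset v, val (snF G τ C u)) - ttau0 G τ v) with hterm_def
  have hdelta : synPot G τ (snF G τ C) - synPot G τ C = ∑ v, term v := by
    rw [synPot_eq_b G τ (snF G τ C), synPot_eq_a G τ C]
    rw [← Finset.sum_sub_distrib, ← Finset.sum_sub_distrib, ← Finset.sum_sub_distrib]
    refine Finset.sum_congr rfl fun v _ => ?_
    simp only [hterm_def]
    ring
  have hterm_eq : ∀ v, snF G τ (snF G τ C) v = C v → term v = 0 := by
    intro v h
    simp [hterm_def, h]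
  have hterm_ne : ∀ v, snF G τ (snF G τ C) v ≠ C v → term v ≤ -(1 / 2) := by
    intro v h
    rcases Bool.eq_false_or_eq_true (snF G τ (snF G τ C) v) with h2 | h2
    · have hc : C v = false := by
        cases hcv : C v
        · rfl
        · exact absurd (h2.trans hcv.symm) h
      have hk := key_true G τ (snF G τ C) v h2
      simp only [hterm_def, h2, hc, val_true, val_false]
      nlinarith
    · have hc : C v = true := by
        cases hcv : C v
        · exact absurd (h2.trans hcv.symm) h
        · rfl
      have hk := key_false G τ (snF G τ C) v h2
      simp only [hterm_def, h2, hc, val_true, val_false]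
      nlinarith

  have hterm_nonpos : ∀ v, term v ≤ 0 := by
    intro v
    by_cases h : snF G τ (snF G τ C) v = C v
    · exact le_of_eq (hterm_eq v h)
    · linarith [hterm_ne v h]
  constructor
  · constructor
    · intro h0
      funext v
      by_contra hne
      have hall : ∀ v ∈ Finset.univ, term v = 0 :=
        (Finset.sum_eq_zero_iff_of_nonpos (fun v _ => hterm_nonpos v)).1 (hdelta ▸ h0)
      have h1 := hall v (Finset.mem_univ v)
      have h2 := hterm_ne v hne
      linarith
    · intro h
      rw [hdelta]
      exact Finset.sum_eq_zero fun v _ => hterm_eq v (congrFun h v)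
  · intro h
    obtain ⟨v, hv⟩ := Function.ne_iff.1 h
    rw [hdelta]
    have hsplit : ∑ w, term w = term v + ∑ w ∈ Finset.univ.erase v, term w :=
      (Finset.add_sum_erase _ _ (Finset.mem_univ v)).symm
    have hrest : ∑ w ∈ Finset.univ.erase v, term w ≤ 0 :=
      Finset.sum_nonpos fun w _ => hterm_nonpos w
    have hle := hterm_ne v hv
    linarith
end

section
/- Let G = (V,E) be a finite simple undirected graph with n vertices and m edges, and thresholds τ : V → ℕ satisfying 1 ≤ τ(v) ≤ d(v) for every vertex v. Let F be the self non-essential inverted-threshold synchronous update. Then for every initial configuration C, setting t = 8m − 2n, we have F^{t+2}(C) = F^{t}(C); that is, starting from any configuration, the synchronous SN dynamics reaches a fixed point or a 2-cycle within 8m − 2n steps. -/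
open scoped Classical

namespace SN17

variable {V : Type*} [Fintype V]

noncomputable def nb (G : SimpleGraph V) (v : V) : Finset V :=
  Finset.univ.filter (fun u => G.Adj v u)

def bval (b : Bool) : ℤ := if b then 1 else 0

lemma bval_nonneg (b : Bool) : 0 ≤ bval b := by cases b <;> simp [bval]
lemma bval_le_one (b : Bool) : bval b ≤ 1 := by cases b <;> simp [bval]

noncomputable def bb (G : SimpleGraph V) (τ : V → ℕ) (v : V) : ℤ :=
  2 * (deg G v : ℤ) - 2 * (τ v : ℤ) + 1

noncomputable def L (G : SimpleGraph V) (τ : V → ℕ) (C : V → Bool) (v : V) : ℤ :=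
  bb G τ v - 2 * ∑ u ∈ nb G v, bval (C u)

lemma deg_eq (G : SimpleGraph V) (v : V) : deg G v = (nb G v).card := by
  rw [deg, Set.ncard_eq_toFinset_card']
  congr 1
  ext u
  simp [nb, SimpleGraph.neighborSet]
  exact Set.mem_toFinset

lemma sum_bval_eq (C : V → Bool) (s : Finset V) :
    ∑ u ∈ s, bval (C u) = ((s.filter (fun u => C u = true)).card : ℤ) := by
  rw [Finset.card_filter]
  push_cast
  refine Finset.sum_congr rfl fun u _ => ?_
  cases h : C u <;> simp [bval, h]

lemma card_split (C : V → Bool) (s : Finset V) :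
    (s.filter (fun u => C u = true)).card + (s.filter (fun u => C u = false)).card = s.card := by
  have h := Finset.card_filter_add_card_filter_not (s := s) (p := fun u => C u = true)
  have h2 : s.filter (fun u => ¬ C u = true) = s.filter (fun u => C u = false) := by
    apply Finset.filter_congr
    intro u _
    cases C u <;> simp
  rw [h2] at h
  exact h

lemma ncard_false (G : SimpleGraph V) (C : V → Bool) (v : V) :
    {u | G.Adj v u ∧ C u = false}.ncard
      = ((nb G v).filter (fun u => C u = false)).card := by
  rw [Set.ncard_eq_toFinset_card']
  congr 1
  ext u
  simp [nb]

lemma L_odd (G : SimpleGraph V) (τ : V → ℕ) (C : V → Bool) (v : V) :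
    ∃ k : ℤ, L G τ C v = 2 * k + 1 :=
  ⟨(deg G v : ℤ) - (τ v : ℤ) - ∑ u ∈ nb G v, bval (C u), by unfold L bb; ring⟩

lemma snF_true_iff (G : SimpleGraph V) (τ : V → ℕ) (C : V → Bool) (v : V) :
    snF G τ C v = true ↔ 0 < L G τ C v := by
  rw [snF, decide_eq_true_iff, ncard_false]
  have h1 := card_split C (nb G v)
  have h2 := sum_bval_eq C (nb G v)
  have h3 := deg_eq G v
  unfold L bb
  rw [h2]
  constructor <;> intro h <;> [skip; skip] <;> omega

lemma snF_false_lt (G : SimpleGraph V) (τ : V → ℕ) (C : V → Bool) (v : V)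
    (h : snF G τ C v = false) : L G τ C v < 0 := by
  obtain ⟨k, hk⟩ := L_odd G τ C v
  have h1 := snF_true_iff G τ C v
  rw [h] at h1
  simp only [Bool.false_eq_true, false_iff, not_lt] at h1
  omega

noncomputable def En (G : SimpleGraph V) (τ : V → ℕ) (x y : V → Bool) : ℤ :=
  2 * ∑ v, ∑ u ∈ nb G v, bval (x v) * bval (y u)
    - ∑ v, bb G τ v * (bval (x v) + bval (y v))

lemma sum_symm (G : SimpleGraph V) (x y : V → Bool) :
    ∑ v, ∑ u ∈ nb G v, bval (x v) * bval (y u)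
      = ∑ v, ∑ u ∈ nb G v, bval (y v) * bval (x u) := by
  have h : ∀ f g : V → ℤ, ∑ v, ∑ u ∈ nb G v, f v * g u
      = ∑ v : V, ∑ u : V, if G.Adj v u then f v * g u else 0 := by
    intro f g
    refine Finset.sum_congr rfl fun v _ => ?_
    rw [nb, Finset.sum_filter]
  rw [h, h, Finset.sum_comm]
  refine Finset.sum_congr rfl fun v _ => Finset.sum_congr rfl fun u _ => ?_
  rw [G.adj_comm, mul_comm]

lemma En_eq (G : SimpleGraph V) (τ : V → ℕ) (x y : V → Bool) :
    En G τ x y = ∑ v, (-(bval (x v) * L G τ y v) - bb G τ v * bval (y v)) := by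
  unfold En L
  rw [Finset.mul_sum, ← Finset.sum_sub_distrib]
  refine Finset.sum_congr rfl fun v _ => ?_
  rw [← Finset.mul_sum]
  ring

lemma En_comm (G : SimpleGraph V) (τ : V → ℕ) (x y : V → Bool) :
    En G τ x y = En G τ y x := by
  unfold En
  rw [sum_symm]
  congr 1
  refine Finset.sum_congr rfl fun v _ => ?_
  ring

lemma En_diff (G : SimpleGraph V) (τ : V → ℕ) (x y z : V → Bool) :
    En G τ z y - En G τ y x = -∑ v, (bval (z v) - bval (x v)) * L G τ y v := by
  rw [En_comm G τ y x, En_eq, En_eq, ← Finset.sum_sub_distrib, ← Finset.sum_neg_distrib]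
  refine Finset.sum_congr rfl fun v _ => ?_
  ring

lemma step_term_nonneg (G : SimpleGraph V) (τ : V → ℕ) (y : V → Bool) (v : V) (a : Bool) :
    0 ≤ (bval (snF G τ y v) - bval a) * L G τ y v := by
  cases hF : snF G τ y v
  · have hL := snF_false_lt G τ y v hF
    cases a <;> simp [bval] <;> omega
  · have hL := (snF_true_iff G τ y v).1 hF
    cases a <;> simp [bval] <;> omega

lemma step_term_one (G : SimpleGraph V) (τ : V → ℕ) (y : V → Bool) (v : V) (a : Bool)
    (hne : snF G τ y v ≠ a) :
    1 ≤ (bval (snF G τ y v) - bval a) * L G τ y v := by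
  cases hF : snF G τ y v
  · have hL := snF_false_lt G τ y v hF
    rw [hF] at hne
    cases a
    · simp at hne
    · simp [bval]; omega
  · have hL := (snF_true_iff G τ y v).1 hF
    rw [hF] at hne
    cases a
    · simp [bval]; omega
    · simp at hne

lemma bb_pos (G : SimpleGraph V) (τ : V → ℕ) (hτ : ∀ v, 1 ≤ τ v ∧ τ v ≤ deg G v) (v : V) :
    1 ≤ bb G τ v := by
  have h2 : (τ v : ℤ) ≤ (deg G v : ℤ) := by exact_mod_cast (hτ v).2
  unfold bb
  omega

lemma L_le_bb (G : SimpleGraph V) (τ : V → ℕ) (C : V → Bool) (v : V) :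
    L G τ C v ≤ bb G τ v := by
  unfold L
  have h : 0 ≤ ∑ u ∈ nb G v, bval (C u) := Finset.sum_nonneg fun u _ => bval_nonneg _
  omega

lemma En_upper (G : SimpleGraph V) (τ : V → ℕ) (hτ : ∀ v, 1 ≤ τ v ∧ τ v ≤ deg G v)
    (y : V → Bool) : En G τ (snF G τ y) y ≤ 0 := by
  rw [En_eq]
  apply Finset.sum_nonpos
  intro v _
  have h1 : 0 ≤ bval (snF G τ y v) * L G τ y v := by
    cases hF : snF G τ y v
    · simp [bval]
    · have h := (snF_true_iff G τ y v).1 hF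
      simp [bval]
      omega
  have h2 : 0 ≤ bb G τ v * bval (y v) :=
    mul_nonneg (by have := bb_pos G τ hτ v; omega) (bval_nonneg _)
  omega

lemma En_lower (G : SimpleGraph V) (τ : V → ℕ) (hτ : ∀ v, 1 ≤ τ v ∧ τ v ≤ deg G v)
    (y : V → Bool) : -(2 * ∑ v, bb G τ v) ≤ En G τ (snF G τ y) y := by
  rw [En_eq]
  have h : ∀ v : V, -(2 * bb G τ v) ≤ -(bval (snF G τ y v) * L G τ y v) - bb G τ v * bval (y v) := by
    intro v
    have hbb := bb_pos G τ hτ v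
    have h1 : bval (snF G τ y v) * L G τ y v ≤ bb G τ v := by
      cases hF : snF G τ y v
      · simp [bval]
        omega
      · have := L_le_bb G τ y v
        simp [bval]
        omega
    have h2 : bb G τ v * bval (y v) ≤ bb G τ v := by
      calc bb G τ v * bval (y v) ≤ bb G τ v * 1 :=
            mul_le_mul_of_nonneg_left (bval_le_one _) (by omega)
        _ = bb G τ v := mul_one _
    omega
  calc -(2 * ∑ v, bb G τ v) = ∑ v, -(2 * bb G τ v) := by
        rw [Finset.mul_sum, ← Finset.sum_neg_distrib]
    _ ≤ _ := Finset.sum_le_sum fun v _ => h v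

lemma deg_eq_degree (G : SimpleGraph V) [DecidableRel G.Adj] (v : V) :
    deg G v = G.degree v := by
  rw [deg_eq, SimpleGraph.degree]
  congr 1
  ext u
  simp [nb]

end SN17

/-- Starting from any configuration, the synchronous SN inverted-threshold dynamics
reaches a fixed point or a 2-cycle within `t = 8m - 2n` steps: `F^(t+2)(C) = F^t(C)`. -/
theorem stmt17 {V : Type*} [Fintype V] (G : SimpleGraph V) (τ : V → ℕ)
    (hτ : ∀ v, 1 ≤ τ v ∧ τ v ≤ deg G v) (C : V → Bool) :
    (snF G τ)^[8 * G.edgeFinset.card - 2 * Fintype.card V + 2] C =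
      (snF G τ)^[8 * G.edgeFinset.card - 2 * Fintype.card V] C := by
  classical
  set m := G.edgeFinset.card with hm
  set n := Fintype.card V with hn
  set T := 8 * m - 2 * n with hT
  set x : ℕ → V → Bool := fun t => (snF G τ)^[t] C with hxdef
  have hx : ∀ t, x (t + 1) = snF G τ (x t) := fun t => Function.iterate_succ_apply' _ _ _
  set e : ℕ → ℤ := fun t => SN17.En G τ (x (t + 1)) (x t) with hedef
  -- arithmetic facts
  have hdeg : ∑ v, deg G v = 2 * m := by
    rw [hm]
    rw [← SimpleGraph.sum_degrees_eq_twice_card_edges]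
    exact Finset.sum_congr rfl fun v _ => SN17.deg_eq_degree G v
  have hτdeg : ∑ v, τ v ≤ 2 * m := by
    rw [← hdeg]
    exact Finset.sum_le_sum fun v _ => (hτ v).2
  have hτn : n ≤ ∑ v, τ v := by
    have h1 : ∑ _v : V, 1 = n := by simp [hn]
    rw [← h1]
    exact Finset.sum_le_sum fun v _ => (hτ v).1
  have hBval : ∑ v, SN17.bb G τ v = 2 * (2 * m : ℤ) - 2 * (∑ v, τ v : ℕ) + n := by
    have hdegZ : (∑ v, (deg G v : ℤ)) = 2 * (m : ℤ) := by exact_mod_cast hdeg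
    have hτZ : (∑ v, (τ v : ℤ)) = ((∑ v, τ v : ℕ) : ℤ) := by push_cast; rfl
    unfold SN17.bb
    rw [Finset.sum_add_distrib, Finset.sum_sub_distrib, ← Finset.mul_sum, ← Finset.mul_sum,
      hdegZ, hτZ]
    simp [hn, Finset.card_univ]
  have hB : 2 * ∑ v, SN17.bb G τ v ≤ (T : ℤ) := by
    have hTcast : (T : ℤ) = 8 * m - 2 * n := by
      rw [hT]
      have : 2 * n ≤ 8 * m := by omega
      push_cast [Nat.cast_sub this]
      ring
    rw [hTcast, hBval]
    have h1 : (n : ℤ) ≤ (∑ v, τ v : ℕ) := by exact_mod_cast hτn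
    have h2 : ((∑ v, τ v : ℕ) : ℤ) ≤ 2 * m := by exact_mod_cast hτdeg
    linarith
  -- energy is decreasing
  have hdec : ∀ t, x (t + 2) ≠ x t → e (t + 1) + 1 ≤ e t := by
    intro t hne
    have hdiff := SN17.En_diff G τ (x t) (x (t + 1)) (x (t + 2))
    obtain ⟨v, hv⟩ := Function.ne_iff.1 hne
    have hx2 : x (t + 2) = snF G τ (x (t + 1)) := hx (t + 1)
    have hterm : ∀ w : V,
        0 ≤ (SN17.bval (x (t + 2) w) - SN17.bval (x t w)) * SN17.L G τ (x (t + 1)) w := by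
      intro w
      rw [hx2]
      exact SN17.step_term_nonneg G τ (x (t + 1)) w (x t w)
    have hv1 : 1 ≤ (SN17.bval (x (t + 2) v) - SN17.bval (x t v)) * SN17.L G τ (x (t + 1)) v := by
      rw [hx2]
      refine SN17.step_term_one G τ (x (t + 1)) v (x t v) ?_
      rw [← hx2]
      exact hv
    have hsum : 1 ≤ ∑ w, (SN17.bval (x (t + 2) w) - SN17.bval (x t w)) * SN17.L G τ (x (t + 1)) w :=
      le_trans hv1 (Finset.single_le_sum (fun w _ => hterm w) (Finset.mem_univ v))
    have he1 : e (t + 1) = SN17.En G τ (x (t + 2)) (x (t + 1)) := rfl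
    have he0 : e t = SN17.En G τ (x (t + 1)) (x t) := rfl
    rw [he1, he0]
    linarith
  have hub : e 0 ≤ 0 := by
    have : e 0 = SN17.En G τ (snF G τ (x 0)) (x 0) := by rw [hedef]; simp only; rw [hx 0]
    rw [this]
    exact SN17.En_upper G τ hτ (x 0)
  have hlb : ∀ t, -(2 * ∑ v, SN17.bb G τ v) ≤ e t := by
    intro t
    have : e t = SN17.En G τ (snF G τ (x t)) (x t) := by rw [hedef]; simp only; rw [hx t]
    rw [this]
    exact SN17.En_lower G τ hτ (x t)
  -- main induction
  have key : ∀ k : ℕ, (∀ t, t < k → x (t + 2) ≠ x t) → e k + k ≤ e 0 := by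
    intro k
    induction k with
    | zero => simp
    | succ k ih =>
      intro h
      have h1 := ih fun t ht => h t (ht.trans (Nat.lt_succ_self k))
      have h2 := hdec k (h k (Nat.lt_succ_self k))
      push_cast
      push_cast at h1
      linarith
  -- existence of a repeat
  have hex : ∃ t, t ≤ T ∧ x (t + 2) = x t := by
    by_contra hno
    push_neg at hno
    have hall : ∀ t, t < T + 1 → x (t + 2) ≠ x t := fun t ht => hno t (Nat.lt_succ_iff.1 ht)
    have h1 := key (T + 1) hall
    have h3 := hlb (T + 1)
    push_cast at h1
    linarith
  obtain ⟨t0, ht0, heq⟩ := hex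
  have prop : ∀ s : ℕ, x (t0 + s + 2) = x (t0 + s) := by
    intro s
    induction s with
    | zero => simpa using heq
    | succ s ih =>
      have e1 : t0 + (s + 1) + 2 = (t0 + s + 2) + 1 := by omega
      have e2 : t0 + (s + 1) = (t0 + s) + 1 := by omega
      rw [e1, e2, hx (t0 + s + 2), ih, ← hx (t0 + s)]
  have hfin : x (T + 2) = x T := by
    obtain ⟨s, hs⟩ := Nat.exists_eq_add_of_le ht0
    rw [hs]
    exact prop s
  exact hfin
end

section
/- Let G = (V,E) be a finite simple undirected graph with n vertices and m edges, and thresholds τ : V → ℕ satisfying 1 ≤ τ(v) ≤ d(v) + 1 for every vertex v. Let F be the self essential inverted-threshold synchronous update. Then for every initial configuration C, there exists t ≤ 8m + 2n such that F^{t+2}(C) = F^{t}(C); that is, starting from any configuration, the synchronous SE dynamics reaches a fixed point or a 2-cycle within 8m + 2n steps. -/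
open scoped Classical

section Aux
variable {V : Type*} [Fintype V] (G : SimpleGraph V) (τ : V → ℕ)

/-- closed neighborhood as a finset -/
noncomputable def NvF (v : V) : Finset V := Finset.univ.filter (fun u => G.Adj v u ∨ u = v)

def cB (b : Bool) : ℤ := if b then 1 else 0

lemma cB_nonneg (b : Bool) : 0 ≤ cB b := by cases b <;> simp [cB]

lemma cB_le_one (b : Bool) : cB b ≤ 1 := by cases b <;> simp [cB]

noncomputable def sI (C : V → Bool) (v : V) : ℤ := ∑ u ∈ NvF G v, cB (C u)

lemma sI_nonneg (C : V → Bool) (v : V) : 0 ≤ sI G C v :=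
  Finset.sum_nonneg fun u _ => cB_nonneg _

noncomputable def thI (v : V) : ℤ := (deg G v : ℤ) + 1 - (τ v : ℤ)

noncomputable def bI (v : V) : ℤ := 2 * thI G τ v + 1

noncomputable def En (C : V → Bool) : ℤ :=
  ∑ v, cB (seF G τ C v) * (2 * sI G C v - bI G τ v) - ∑ v, bI G τ v * cB (C v)

lemma NvF_card (v : V) : (NvF G v).card = deg G v + 1 := by
  have h1 : NvF G v = insert v (Finset.univ.filter (fun u => G.Adj v u)) := by
    ext u; simp [NvF, or_comm, eq_comm]
  have h2 : v ∉ Finset.univ.filter (fun u => G.Adj v u) := by simp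
  have h3 : deg G v = (Finset.univ.filter (fun u => G.Adj v u)).card := by
    rw [deg]
    have : G.neighborSet v = ↑(Finset.univ.filter (fun u => G.Adj v u)) := by
      ext u; simp [SimpleGraph.neighborSet]
    rw [this, Set.ncard_coe_finset]
  rw [h1, Finset.card_insert_of_notMem h2, h3]

lemma mem_NvF_comm {u v : V} : u ∈ NvF G v ↔ v ∈ NvF G u := by
  simp only [NvF, Finset.mem_filter, Finset.mem_univ, true_and]
  rw [G.adj_comm, eq_comm]

lemma seF_iff (C : V → Bool) (v : V) :
    seF G τ C v = true ↔ sI G C v ≤ thI G τ v := by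
  have hset : {u | (G.Adj v u ∨ u = v) ∧ C u = false} =
      ↑((NvF G v).filter (fun u => C u = false)) := by
    ext u; simp [NvF]
  have hT : sI G C v = (((NvF G v).filter (fun u => C u = true)).card : ℤ) := by
    rw [sI]
    rw [Finset.card_filter]
    push_cast
    exact Finset.sum_congr rfl fun u _ => by cases C u <;> simp [cB]
  have hsum : ((NvF G v).filter (fun u => C u = true)).card
      + ((NvF G v).filter (fun u => C u = false)).card = deg G v + 1 := by
    have hf : (NvF G v).filter (fun u => C u = false)
        = (NvF G v).filter (fun u => ¬ C u = true) :=
      Finset.filter_congr fun u _ => by simp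
    rw [hf, Finset.card_filter_add_card_filter_not, NvF_card]
  rw [seF, hset, Set.ncard_coe_finset, decide_eq_true_iff, thI, hT]
  omega

lemma thI_nonneg (hτ : ∀ v, 1 ≤ τ v ∧ τ v ≤ deg G v + 1) (v : V) : 0 ≤ thI G τ v := by
  have := (hτ v).2; rw [thI]; omega

lemma seF_true_bound (C : V → Bool) (v : V) (h : seF G τ C v = true) :
    2 * sI G C v - bI G τ v ≤ -1 := by
  have := (seF_iff G τ C v).mp h
  rw [bI]; omega

lemma seF_false_bound (C : V → Bool) (v : V) (h : seF G τ C v = false) :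
    1 ≤ 2 * sI G C v - bI G τ v := by
  have : ¬ (sI G C v ≤ thI G τ v) := fun hh => by
    simp [(seF_iff G τ C v).mpr hh] at h
  rw [bI]; omega

lemma symm_sum (C C' : V → Bool) :
    ∑ v, cB (C' v) * sI G C v = ∑ v, cB (C v) * sI G C' v := by
  have key : ∀ (A B : V → Bool), ∑ v, cB (A v) * sI G B v
      = ∑ v, ∑ u, (if u ∈ NvF G v then cB (A v) * cB (B u) else 0) := by
    intro A B
    refine Finset.sum_congr rfl fun v _ => ?_
    rw [sI, Finset.mul_sum, Finset.sum_ite_mem, Finset.univ_inter]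
  rw [key, key, Finset.sum_comm]
  refine Finset.sum_congr rfl fun u _ => Finset.sum_congr rfl fun v _ => ?_
  by_cases h : u ∈ NvF G v
  · rw [if_pos h, if_pos ((mem_NvF_comm G).mp h), mul_comm]
  · rw [if_neg h, if_neg (fun hh => h ((mem_NvF_comm G).mpr hh))]

lemma En_step (C : V → Bool) :
    En G τ (seF G τ C) - En G τ C
      = ∑ v, (cB (seF G τ (seF G τ C) v) - cB (C v)) * (2 * sI G (seF G τ C) v - bI G τ v) := by
  have hEnC : En G τ C = ∑ v, cB (C v) * (2 * sI G (seF G τ C) v - bI G τ v)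
      - ∑ v, bI G τ v * cB (seF G τ C v) := by
    rw [En]
    have h1 : ∑ v, cB (seF G τ C v) * (2 * sI G C v - bI G τ v)
        = 2 * (∑ v, cB (seF G τ C v) * sI G C v) - ∑ v, cB (seF G τ C v) * bI G τ v := by
      rw [Finset.mul_sum, ← Finset.sum_sub_distrib]
      refine Finset.sum_congr rfl fun v _ => by ring
    have h2 : ∑ v, cB (C v) * (2 * sI G (seF G τ C) v - bI G τ v)
        = 2 * (∑ v, cB (C v) * sI G (seF G τ C) v) - ∑ v, cB (C v) * bI G τ v := by
      rw [Finset.mul_sum, ← Finset.sum_sub_distrib]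
      refine Finset.sum_congr rfl fun v _ => by ring
    rw [h1, h2, symm_sum G C (seF G τ C)]
    have h3 : ∑ v, cB (seF G τ C v) * bI G τ v = ∑ v, bI G τ v * cB (seF G τ C v) :=
      Finset.sum_congr rfl fun v _ => mul_comm _ _
    have h4 : ∑ v, bI G τ v * cB (C v) = ∑ v, cB (C v) * bI G τ v :=
      Finset.sum_congr rfl fun v _ => mul_comm _ _
    rw [h3, h4]; ring
  rw [hEnC, En, sub_sub_sub_cancel_right, ← Finset.sum_sub_distrib]
  refine Finset.sum_congr rfl fun v _ => by ring

end Aux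

section Aux2
variable {V : Type*} [Fintype V] (G : SimpleGraph V) (τ : V → ℕ)

lemma En_decrease (C : V → Bool) (h : seF G τ (seF G τ C) ≠ C) :
    En G τ (seF G τ C) ≤ En G τ C - 1 := by
  set C1 := seF G τ C with hC1
  set C2 := seF G τ C1 with hC2
  have hterm : ∀ v, (cB (C2 v) - cB (C v)) * (2 * sI G C1 v - bI G τ v)
      ≤ if C2 v ≠ C v then -1 else 0 := by
    intro v
    by_cases hv : C2 v = C v
    · simp [hv]
    · rw [if_pos hv]
      cases h2 : C2 v
      · have hb := seF_false_bound G τ C1 v (hC2 ▸ h2)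
        have hc : C v = true := by simp_all
        rw [hc]; norm_num [cB]; linarith
      · have hb := seF_true_bound G τ C1 v (hC2 ▸ h2)
        have hc : C v = false := by simp_all
        rw [hc]; norm_num [cB]; linarith
  obtain ⟨v0, hv0⟩ := Function.ne_iff.mp h
  have hsum : ∑ v, (cB (C2 v) - cB (C v)) * (2 * sI G C1 v - bI G τ v)
      ≤ ∑ v, (if C2 v ≠ C v then (-1 : ℤ) else 0) :=
    Finset.sum_le_sum fun v _ => hterm v
  have hsum2 : ∑ v, (if C2 v ≠ C v then (-1 : ℤ) else 0) ≤ -1 := by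
    have h1 : ∀ v ∈ Finset.univ, (if C2 v ≠ C v then (-1 : ℤ) else 0)
        ≤ if v = v0 then -1 else 0 := by
      intro v _
      by_cases hvv : v = v0
      · rw [if_pos hvv, hvv, if_pos hv0]
      · rw [if_neg hvv]; split <;> omega
    calc ∑ v, (if C2 v ≠ C v then (-1 : ℤ) else 0)
        ≤ ∑ v, (if v = v0 then (-1 : ℤ) else 0) := Finset.sum_le_sum h1
      _ = -1 := by rw [Finset.sum_ite_eq' Finset.univ v0 (fun _ => (-1:ℤ))]
                   simp
  have := En_step G τ C
  rw [← hC1, ← hC2] at this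
  linarith [hsum.trans hsum2, this.ge, this.le]

lemma bI_pos (hτ : ∀ v, 1 ≤ τ v ∧ τ v ≤ deg G v + 1) (v : V) : 1 ≤ bI G τ v := by
  have := thI_nonneg G τ hτ v; rw [bI]; omega

lemma En_le_zero (hτ : ∀ v, 1 ≤ τ v ∧ τ v ≤ deg G v + 1) (C : V → Bool) :
    En G τ C ≤ 0 := by
  rw [En]
  have h1 : ∑ v, cB (seF G τ C v) * (2 * sI G C v - bI G τ v) ≤ 0 := by
    refine Finset.sum_nonpos fun v _ => ?_
    cases h : seF G τ C v
    · simp [cB]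
    · have := seF_true_bound G τ C v h; simp [cB]; linarith
  have h2 : 0 ≤ ∑ v, bI G τ v * cB (C v) :=
    Finset.sum_nonneg fun v _ =>
      mul_nonneg (by linarith [bI_pos G τ hτ v]) (cB_nonneg _)
  linarith

lemma En_lower (hτ : ∀ v, 1 ≤ τ v ∧ τ v ≤ deg G v + 1) (C : V → Bool) :
    -(2 * ∑ v, bI G τ v) ≤ En G τ C := by
  rw [En]
  have h1 : ∀ v ∈ Finset.univ, -(bI G τ v) ≤ cB (seF G τ C v) * (2 * sI G C v - bI G τ v) := by
    intro v _
    cases h : seF G τ C v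
    · simp [cB]; linarith [bI_pos G τ hτ v]
    · simp [cB]; linarith [sI_nonneg G C v]
  have h2 : ∀ v ∈ Finset.univ, bI G τ v * cB (C v) ≤ bI G τ v := by
    intro v _
    calc bI G τ v * cB (C v) ≤ bI G τ v * 1 :=
          mul_le_mul_of_nonneg_left (cB_le_one _) (by linarith [bI_pos G τ hτ v])
      _ = bI G τ v := mul_one _
  have hA := Finset.sum_le_sum h1
  have hB := Finset.sum_le_sum h2
  rw [Finset.sum_neg_distrib] at hA
  linarith

lemma sum_bI_le (hτ : ∀ v, 1 ≤ τ v ∧ τ v ≤ deg G v + 1) :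
    ∑ v, bI G τ v ≤ 4 * (G.edgeFinset.card : ℤ) + (Fintype.card V : ℤ) := by
  classical
  have hdeg : ∀ v, deg G v = G.degree v := by
    intro v
    rw [deg, SimpleGraph.degree, Set.ncard_eq_toFinset_card', SimpleGraph.neighborFinset_def]
  have hsum : ∑ v, (deg G v : ℤ) = 2 * (G.edgeFinset.card : ℤ) := by
    have := SimpleGraph.sum_degrees_eq_twice_card_edges G
    have h2 : ∑ v, deg G v = 2 * G.edgeFinset.card := by
      rw [Finset.sum_congr rfl fun v _ => hdeg v]; exact this
    exact_mod_cast congrArg (Nat.cast : ℕ → ℤ) h2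
  have h1 : ∀ v ∈ Finset.univ, bI G τ v ≤ 2 * (deg G v : ℤ) + 1 := by
    intro v _
    have := (hτ v).1
    rw [bI, thI]; omega
  calc ∑ v, bI G τ v ≤ ∑ v, (2 * (deg G v : ℤ) + 1) := Finset.sum_le_sum h1
    _ = 2 * ∑ v, (deg G v : ℤ) + (Fintype.card V : ℤ) := by
        rw [Finset.sum_add_distrib, ← Finset.mul_sum, Finset.sum_const, Finset.card_univ]
        simp
    _ ≤ 4 * (G.edgeFinset.card : ℤ) + (Fintype.card V : ℤ) := by rw [hsum]; linarith

end Aux2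

/-- Starting from any configuration, the synchronous SE inverted-threshold dynamics
reaches a fixed point or a 2-cycle within `8m + 2n` steps: there is `t ≤ 8m + 2n` with
`F^(t+2)(C) = F^t(C)`. -/
theorem stmt18 {V : Type*} [Fintype V] (G : SimpleGraph V) (τ : V → ℕ)
    (hτ : ∀ v, 1 ≤ τ v ∧ τ v ≤ deg G v + 1) (C : V → Bool) :
    ∃ t ≤ 8 * G.edgeFinset.card + 2 * Fintype.card V,
      (seF G τ)^[t + 2] C = (seF G τ)^[t] C := by
  by_contra hcon
  push_neg at hcon
  set N := 8 * G.edgeFinset.card + 2 * Fintype.card V with hN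
  have hstep : ∀ t ≤ N, En G τ ((seF G τ)^[t + 1] C) ≤ En G τ ((seF G τ)^[t] C) - 1 := by
    intro t ht
    have hne : seF G τ (seF G τ ((seF G τ)^[t] C)) ≠ (seF G τ)^[t] C := by
      intro he
      refine hcon t ht ?_
      rw [show t + 2 = (t + 1) + 1 from rfl, Function.iterate_succ_apply',
        Function.iterate_succ_apply', he]
    have := En_decrease G τ ((seF G τ)^[t] C) hne
    rwa [Function.iterate_succ_apply']
  have hdec : ∀ k, k ≤ N + 1 → En G τ ((seF G τ)^[k] C) ≤ En G τ C - k := by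
    intro k
    induction k with
    | zero => intro _; simp
    | succ k ih =>
      intro hk
      have h1 := ih (by omega)
      have h2 := hstep k (by omega)
      push_cast
      push_cast at h1
      linarith
  have hfin := hdec (N + 1) le_rfl
  have hlow := En_lower G τ hτ ((seF G τ)^[N + 1] C)
  have hup := En_le_zero G τ hτ C
  have hsb := sum_bI_le G τ hτ
  have hNcast : (N : ℤ) = 8 * (G.edgeFinset.card : ℤ) + 2 * (Fintype.card V : ℤ) := by
    rw [hN]; push_cast; ring
  have hfin2 : En G τ ((seF G τ)^[N + 1] C) ≤ En G τ C - ((N : ℤ) + 1) := by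
    push_cast at hfin; linarith
  rw [hNcast] at hfin2
  linarith
end

section
/- Let n ≥ 3 be odd and let G be the cycle graph on n vertices, with τ(v) = 2 for every vertex v. Then the self essential (SE) inverted-threshold update on G has no fixed point: there is no configuration C : V → {0,1} such that for every vertex v, C(v) = 1 if and only if |{u ∈ N(v) ∪ {v} : C(u) = 0}| ≥ 2. Equivalently, this self essential anti-coordination game has no pure Nash equilibrium. -/
open Fin.CommRing

lemma seF_key (m : ℕ) (C : Fin (m+3) → Bool)
    (hC : seF (SimpleGraph.cycleGraph (m+3)) (fun _ => 2) C = C) (v : Fin (m+3)) :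
    C (v + 1) = !C v := by
  have hv := congrFun hC v
  clear hC
  simp only [seF] at hv
  have hset : {u : Fin (m+3) | ((SimpleGraph.cycleGraph (m+3)).Adj v u ∨ u = v) ∧ C u = false}
      = ↑(({v - 1, v, v + 1} : Finset (Fin (m+3))).filter (fun u => C u = false)) := by
    ext u
    have hadj : (SimpleGraph.cycleGraph (m+3)).Adj v u ↔ v - u = 1 ∨ u - v = 1 :=
      SimpleGraph.cycleGraph_adj (n := m + 1)
    have h1 : v - u = 1 ↔ u = v - 1 := by
      constructor <;> intro h
      · rw [eq_sub_iff_add_eq, ← h]; ring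
      · rw [h]; ring
    have h2 : u - v = 1 ↔ u = v + 1 := by
      constructor <;> intro h
      · rw [← h]; ring
      · rw [h]; ring
    simp [hadj, h1, h2, or_assoc, or_comm, or_left_comm]
  have hdvd : ∀ a : ℕ, ((a : Fin (m+3)) = 0) → (m + 3) ∣ a := fun a h =>
    Fin.natCast_eq_zero.mp h
  have hne1 : v - 1 ≠ v := by
    intro h
    have h2 : ((1:ℕ) : Fin (m+3)) = 0 := by
      push_cast
      calc (1 : Fin (m+3)) = v - (v - 1) := by ring
        _ = 0 := by rw [h, sub_self]
    have := Nat.le_of_dvd one_pos (hdvd 1 h2)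
    omega
  have hne2 : v ≠ v + 1 := by
    intro h
    have h2 : ((1:ℕ) : Fin (m+3)) = 0 := by
      push_cast
      calc (1 : Fin (m+3)) = v + 1 - v := by ring
        _ = 0 := by rw [← h, sub_self]
    have := Nat.le_of_dvd one_pos (hdvd 1 h2)
    omega
  have hne3 : v - 1 ≠ v + 1 := by
    intro h
    have h2 : ((2:ℕ) : Fin (m+3)) = 0 := by
      push_cast
      calc (2 : Fin (m+3)) = v + 1 - (v - 1) := by ring
        _ = 0 := by rw [← h, sub_self]
    have := Nat.le_of_dvd two_pos (hdvd 2 h2)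
    omega
  rw [hset, Set.ncard_coe_finset] at hv
  cases hb : C v <;> cases ha : C (v - 1) <;> cases hc : C (v + 1) <;>
    simp [Finset.filter_insert, Finset.filter_singleton, ha, hb, hc,
      Finset.card_insert_of_notMem, hne1, hne2, hne3] at hv ⊢

/-- On an odd cycle graph with all thresholds equal to `2`, the SE inverted-threshold
update has no fixed point; equivalently, this self essential anti-coordination game has no
pure Nash equilibrium. -/
theorem stmt19 (n : ℕ) (hn : 3 ≤ n) (hodd : Odd n) :
    ¬ ∃ C : Fin n → Bool,
        seF (SimpleGraph.cycleGraph n) (fun _ => 2) C = C := by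
  obtain ⟨m, rfl⟩ : ∃ m, n = m + 3 := ⟨n - 3, by omega⟩
  rintro ⟨C, hC⟩
  have key := seF_key m C hC
  have hcast : ∀ k : ℕ, C ((k : Fin (m+3))) = xor (decide (Odd k)) (C 0) := by
    intro k
    induction k with
    | zero => simp
    | succ k ih =>
      have h1 : ((k + 1 : ℕ) : Fin (m+3)) = (k : Fin (m+3)) + 1 := by push_cast; ring
      have h2 : decide (Odd (k + 1)) = !decide (Odd k) := by simp [Nat.odd_add_one, ← Nat.not_odd_iff_even]
      rw [h1, key, ih, h2]
      cases decide (Odd k) <;> cases C 0 <;> rfl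
  have hfin := hcast (m + 3)
  rw [Fin.natCast_self, decide_eq_true hodd] at hfin
  cases h0 : C 0 <;> rw [h0] at hfin <;> exact absurd hfin (by decide)
end
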